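/- arXiv:2504.03204 — 10 statements merged into one kernel-verified Lean document; each statement's English description precedes it below -/
import Mathlib

section
/- Let n ≥ 1 and m ≥ 1. Let K, G ⊆ S^n_+ be closed convex cones with G ⊆ K, let Q, H ∈ S^n, let B^1, …, B^m ∈ S^n, and let F_K be a face of K with G ⊆ F_K. Assume: (C1) if COP(G, Q, H) has an optimal solution, then it has a rank-1 optimal solution; (C2) for every k ∈ {1,…,m}, J_0(B^k) ⊆ K and F_K ∩ J_0(B^k) ⊆ G; (C3) for all distinct k, l ∈ {1,…,m}, F_K ∩ J_0(B^k) ⊆ J_+(B^l); (C4) there exist X̄ ∈ F_K ∩ G, t̄ ∈ ℝ, ȳ ∈ ℝ^m and Ȳ ∈ S^n such that ⟨B^k, X̄⟩ ≥ 0 for all k, ⟨H, X̄⟩ = 1, ȳ_k ≥ 0 for all k, Q − t̄·H − Σ_{k=1}^m ȳ_k·B^k = Ȳ with ⟨Ȳ, X⟩ ≥ 0 for every X ∈ F_K ∩ G, Σ_{k=1}^m ȳ_k·⟨B^k, X̄⟩ = 0, and ⟨Ȳ, X̄⟩ = 0. Then COP(G ∩ J_+({B^1,…,B^m}), Q, H)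 has a rank-1 optimal solution: there exists x ∈ ℝ^n such that x·xᵀ ∈ G, ⟨B^k, x·xᵀ⟩ ≥ 0 for all k, ⟨H, x·xᵀ⟩ = 1, and ⟨Q, x·xᵀ⟩ ≤ ⟨Q, X⟩ for every X ∈ G with ⟨B^k, X⟩ ≥ 0 for all k and ⟨H, X⟩ = 1. -/
/-!
By (C4), `t̄` is a lower bound for COP(G ∩ J₊(ℬ), Q, H) attained at `X̄`. Any `X ∈ G` with
`⟨H, X⟩ = 1`, `⟨Q, X⟩ = t̄` and `⟨Bᵏ⁰, X⟩ = 0` for some `k₀` yields a rank-one optimal solution: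
the Sturm–Zhang decomposition `X = ∑ xᵢxᵢᵀ` with `xᵢᵀBᵏ⁰xᵢ = 0` puts every piece in
`J₀(Bᵏ⁰) ⊆ K`, hence in the face `F_K`, hence in `G` and in every `J₊(Bˡ)` by (C2) and (C3).
The Lagrangian gap `⟨Q, ·⟩ - t̄⟨H, ·⟩` is nonnegative on the pieces and sums to zero over them,
so a suitably rescaled piece is optimal.

If no constraint is tight at `X̄`, then `ȳ = 0`, so `X̄` solves COP(G, Q, H) and (C1) provides an
optimal `xxᵀ` of value `t̄`; if `xxᵀ` violates some constraint, that constraint is tight at a point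
of the segment from `xxᵀ` to `X̄`, and the first case applies.
-/

open Matrix

section RankOneDecomposition

variable {n ι : Type*}

lemma exists_pos_and_neg_of_sum_eq_zero [Fintype ι] {f : ι → ℝ} (h : ∑ i, f i = 0)
    (hf : ∃ i, f i ≠ 0) : (∃ i, 0 < f i) ∧ ∃ j, f j < 0 := by
  obtain ⟨i, hi⟩ := hf
  constructor
  · by_contra! hpos
    exact hi ((Finset.sum_eq_zero_iff_of_nonpos fun j _ => hpos j).1 h i (Finset.mem_univ i))
  · by_contra! hneg
    exact hi ((Finset.sum_eq_zero_iff_of_nonneg fun j _ => hneg j).1 h i (Finset.mem_univ i))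

lemma exists_add_mul_add_sq_mul_eq_zero {c₀ c₁ c₂ : ℝ} (h₀ : 0 < c₀) (h₂ : c₂ < 0) :
    ∃ t : ℝ, c₀ + t * c₁ + t ^ 2 * c₂ = 0 := by
  have hdisc : 0 ≤ discrim c₂ c₁ c₀ := by unfold discrim; nlinarith
  obtain ⟨t, ht⟩ := exists_quadratic_eq_zero h₂.ne
    ⟨√(discrim c₂ c₁ c₀), (Real.mul_self_sqrt hdisc).symm⟩
  exact ⟨t, by linear_combination ht⟩

lemma vecMulVec_rotate_add (a b : n → ℝ) {s t : ℝ} (h : s ^ 2 * (1 + t ^ 2) = 1) :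
    vecMulVec (s • (a + t • b)) (s • (a + t • b)) + vecMulVec (s • (b - t • a)) (s • (b - t • a))
      = vecMulVec a a + vecMulVec b b := by
  ext i j
  simp only [vecMulVec_apply, Matrix.add_apply, Pi.smul_apply, Pi.add_apply, Pi.sub_apply,
    smul_eq_mul]
  linear_combination (a i * a j + b i * b j) * h

lemma sum_vecMulVec_update_update [Fintype ι] [DecidableEq ι] {v : ι → n → ℝ} {i j : ι}
    (hij : i ≠ j) {a b : n → ℝ}
    (hab : vecMulVec a a + vecMulVec b b = vecMulVec (v i) (v i) + vecMulVec (v j) (v j)) :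
    ∑ k, vecMulVec (Function.update (Function.update v i a) j b k)
        (Function.update (Function.update v i a) j b k) = ∑ k, vecMulVec (v k) (v k) := by
  rw [← Finset.sum_add_sum_compl {i, j},
    ← Finset.sum_add_sum_compl {i, j} (fun k => vecMulVec (v k) (v k)),
    Finset.sum_pair hij, Finset.sum_pair hij]
  simp only [Function.update_self, Function.update_of_ne hij, hab]
  congr 1
  refine Finset.sum_congr rfl fun k hk => ?_
  simp only [Finset.mem_compl, Finset.mem_insert, Finset.mem_singleton, not_or] at hk
  simp only [Function.update_of_ne hk.1, Function.update_of_ne hk.2]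

variable [Fintype n]

lemma trace_mul_vecMulVec_add_smul (A : Matrix n n ℝ) (a b : n → ℝ) (t : ℝ) :
    (A * vecMulVec (a + t • b) (a + t • b)).trace =
      (A * vecMulVec a a).trace + t * (A * (vecMulVec a b + vecMulVec b a)).trace
        + t ^ 2 * (A * vecMulVec b b).trace := by
  simp only [vecMulVec_add, add_vecMulVec, vecMulVec_smul, smul_vecMulVec,
    Matrix.mul_add, Matrix.mul_smul, trace_add, trace_smul, smul_eq_mul]
  ring

lemma trace_mul_vecMulVec_smul (A : Matrix n n ℝ) (s : ℝ) (a : n → ℝ) :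
    (A * vecMulVec (s • a) (s • a)).trace = s ^ 2 * (A * vecMulVec a a).trace := by
  simp only [vecMulVec_smul, smul_vecMulVec, smul_smul, Matrix.mul_smul, trace_smul,
    smul_eq_mul]
  ring

lemma exists_vecMulVec_add_eq_trace_mul_eq_zero (A : Matrix n n ℝ) {a b : n → ℝ}
    (ha : 0 < (A * vecMulVec a a).trace) (hb : (A * vecMulVec b b).trace < 0) :
    ∃ a' b' : n → ℝ, vecMulVec a' a' + vecMulVec b' b' = vecMulVec a a + vecMulVec b b ∧
      (A * vecMulVec a' a').trace = 0 := by
  obtain ⟨t, ht⟩ := exists_add_mul_add_sq_mul_eq_zero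
    (c₁ := (A * (vecMulVec a b + vecMulVec b a)).trace) ha hb
  have hs : (√(1 + t ^ 2))⁻¹ ^ 2 * (1 + t ^ 2) = 1 := by
    rw [inv_pow, Real.sq_sqrt (by positivity), inv_mul_cancel₀ (by positivity)]
  refine ⟨_, _, vecMulVec_rotate_add a b hs, ?_⟩
  rw [trace_mul_vecMulVec_smul, trace_mul_vecMulVec_add_smul, ht, mul_zero]

lemma exists_sum_vecMulVec_eq_forall_trace_mul_eq_zero [Fintype ι]
    (A : Matrix n n ℝ) (v : ι → n → ℝ) (hv : ∑ i, (A * vecMulVec (v i) (v i)).trace = 0) :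
    ∃ w : ι → n → ℝ, ∑ i, vecMulVec (w i) (w i) = ∑ i, vecMulVec (v i) (v i) ∧
      ∀ i, (A * vecMulVec (w i) (w i)).trace = 0 := by
  classical
  suffices key : ∀ (s : Finset ι) (v : ι → n → ℝ),
      (∀ i ∉ s, (A * vecMulVec (v i) (v i)).trace = 0) →
      ∑ i, (A * vecMulVec (v i) (v i)).trace = 0 →
      ∃ w : ι → n → ℝ, ∑ i, vecMulVec (w i) (w i) = ∑ i, vecMulVec (v i) (v i) ∧
        ∀ i, (A * vecMulVec (w i) (w i)).trace = 0 from
    key Finset.univ v (by simp) hv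
  intro s
  induction s using Finset.strongInduction with
  | H s ih =>
  intro v hvs hv
  by_cases hzero : ∀ i, (A * vecMulVec (v i) (v i)).trace = 0
  · exact ⟨v, rfl, hzero⟩
  push Not at hzero
  obtain ⟨⟨i, hi⟩, ⟨j, hj⟩⟩ := exists_pos_and_neg_of_sum_eq_zero hv hzero
  have hij : i ≠ j := by rintro rfl; linarith
  have his : i ∈ s := by by_contra h; linarith [hvs i h]
  have hjs : j ∈ s := by by_contra h; linarith [hvs j h]
  obtain ⟨a, b, hab, ha⟩ := exists_vecMulVec_add_eq_trace_mul_eq_zero A hi hj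
  set w := Function.update (Function.update v i a) j b
  have hsum : ∑ k, vecMulVec (w k) (w k) = ∑ k, vecMulVec (v k) (v k) :=
    sum_vecMulVec_update_update hij hab
  have hws : ∀ k ∉ s.erase i, (A * vecMulVec (w k) (w k)).trace = 0 := by
    intro k hk
    rcases eq_or_ne k i with rfl | hki
    · simpa [w, hij] using ha
    have hks : k ∉ s := fun hks => hk (Finset.mem_erase.2 ⟨hki, hks⟩)
    have hkj : k ≠ j := by rintro rfl; exact hks hjs
    simpa [w, hki, hkj] using hvs k hks
  obtain ⟨w', hw'w, hw'⟩ := ih (s.erase i) (Finset.erase_ssubset his) w hws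
    (by rw [← trace_sum, ← Matrix.mul_sum, hsum, Matrix.mul_sum, trace_sum, hv])
  exact ⟨w', hw'w.trans hsum, hw'⟩

theorem Matrix.PosSemidef.exists_sum_vecMulVec_forall_trace_mul_eq_zero {X : Matrix n n ℝ}
    (hX : X.PosSemidef) {A : Matrix n n ℝ} (hAX : (A * X).trace = 0) :
    ∃ (r : ℕ) (w : Fin r → n → ℝ), X = ∑ i, vecMulVec (w i) (w i) ∧
      ∀ i, (A * vecMulVec (w i) (w i)).trace = 0 := by
  obtain ⟨r, v, rfl⟩ := posSemidef_iff_eq_sum_vecMulVec.1 hX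
  simp only [star_trivial] at hAX ⊢
  obtain ⟨w, hw, hwA⟩ := exists_sum_vecMulVec_eq_forall_trace_mul_eq_zero A v
    (by rwa [← trace_sum, ← Matrix.mul_sum])
  exact ⟨r, w, hw.symm, hwA⟩

end RankOneDecomposition

section Segment

variable {n : Type*} [Fintype n]

lemma image_segment_trace_mul (A X₀ X₁ : Matrix n n ℝ) :
    (fun X => (A * X).trace) '' segment ℝ X₀ X₁ =
      segment ℝ (A * X₀).trace (A * X₁).trace :=
  image_segment ℝ (traceLinearMap n ℝ ℝ ∘ₗ LinearMap.mulLeft ℝ A).toAffineMap X₀ X₁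

lemma exists_mem_segment_trace_mul_eq_zero {A X₀ X₁ : Matrix n n ℝ}
    (h₀ : (A * X₀).trace ≤ 0) (h₁ : 0 ≤ (A * X₁).trace) :
    ∃ X ∈ segment ℝ X₀ X₁, (A * X).trace = 0 := by
  have h : (0 : ℝ) ∈ segment ℝ (A * X₀).trace (A * X₁).trace := by
    rw [segment_eq_Icc (h₀.trans h₁)]
    exact ⟨h₀, h₁⟩
  rwa [← image_segment_trace_mul] at h

lemma trace_mul_eq_of_mem_segment {A X₀ X₁ X : Matrix n n ℝ} {c : ℝ}
    (hX : X ∈ segment ℝ X₀ X₁) (h₀ : (A * X₀).trace = c) (h₁ : (A * X₁).trace = c) :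
    (A * X).trace = c := by
  have h := Set.mem_image_of_mem (fun X => (A * X).trace) hX
  rwa [image_segment_trace_mul, h₀, h₁, segment_same, Set.mem_singleton_iff] at h

end Segment

section ConicProgram

variable {n ι : Type*} [Fintype n]

def J₀ (A : Matrix n n ℝ) : Set (Matrix n n ℝ) := {X | X.PosSemidef ∧ (A * X).trace = 0}

lemma sum_mem_J₀ {A : Matrix n n ℝ} (s : Finset ι) {f : ι → Matrix n n ℝ}
    (hf : ∀ i ∈ s, f i ∈ J₀ A) : ∑ i ∈ s, f i ∈ J₀ A :=
  ⟨posSemidef_sum s fun i hi => (hf i hi).1, by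
    rw [Matrix.mul_sum, trace_sum]
    exact Finset.sum_eq_zero fun i hi => (hf i hi).2⟩

variable [Fintype ι] {K G F : Set (Matrix n n ℝ)} {Q H Y : Matrix n n ℝ}
  {B : ι → Matrix n n ℝ} {t : ℝ} {y : ι → ℝ}

lemma eq_zero_of_sum_mul_eq_zero {a b : ι → ℝ} (ha : ∀ k, 0 ≤ a k) (hb : ∀ k, 0 < b k)
    (h : ∑ k, a k * b k = 0) (k : ι) : a k = 0 :=
  (mul_eq_zero.1 ((Finset.sum_eq_zero_iff_of_nonneg fun k _ => mul_nonneg (ha k) (hb k).le).1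
    h k (Finset.mem_univ k))).resolve_right (hb k).ne'

lemma trace_mul_eq_of_sub_sub_sum_eq (hLag : Q - t • H - ∑ k, y k • B k = Y)
    (X : Matrix n n ℝ) :
    (Q * X).trace = t * (H * X).trace + ∑ k, y k * (B k * X).trace + (Y * X).trace := by
  rw [← hLag]
  simp only [Matrix.sub_mul, Matrix.smul_mul, Finset.sum_mul, trace_sub, trace_smul, trace_sum,
    smul_eq_mul]
  ring

lemma le_trace_mul_of_sub_sub_sum_eq (hLag : Q - t • H - ∑ k, y k • B k = Y)
    {X : Matrix n n ℝ} (hyX : ∀ k, 0 ≤ y k * (B k * X).trace) (hYX : 0 ≤ (Y * X).trace) :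
    t * (H * X).trace ≤ (Q * X).trace := by
  rw [trace_mul_eq_of_sub_sub_sum_eq hLag]
  linarith [Finset.sum_nonneg fun k (_ : k ∈ Finset.univ) => hyX k]

theorem exists_vecMulVec_of_mem_J₀
    (hGcone : ∀ c : ℝ, 0 ≤ c → ∀ X ∈ G, c • X ∈ G)
    (hface : ∀ X ∈ K, ∀ Y ∈ K, X + Y ∈ F → X ∈ F ∧ Y ∈ F) {k₀ : ι}
    (hJK : J₀ (B k₀) ⊆ K) (hJG : F ∩ J₀ (B k₀) ⊆ G)
    (hJB : ∀ l ≠ k₀, ∀ X ∈ F ∩ J₀ (B k₀), 0 ≤ (B l * X).trace)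
    (hy : ∀ k, 0 ≤ y k) (hLag : Q - t • H - ∑ k, y k • B k = Y)
    (hY : ∀ X ∈ F ∩ G, 0 ≤ (Y * X).trace)
    {X : Matrix n n ℝ} (hXF : X ∈ F) (hXJ : X ∈ J₀ (B k₀)) (hXH : (H * X).trace = 1)
    (hXQ : (Q * X).trace = t) :
    ∃ x : n → ℝ, vecMulVec x x ∈ G ∧ (∀ k, 0 ≤ (B k * vecMulVec x x).trace) ∧
      (H * vecMulVec x x).trace = 1 ∧ (Q * vecMulVec x x).trace = t := by
  obtain ⟨r, w, rfl, hw⟩ := hXJ.1.exists_sum_vecMulVec_forall_trace_mul_eq_zero hXJ.2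
  set P : Fin r → Matrix n n ℝ := fun i => vecMulVec (w i) (w i)
  have hPJ : ∀ i, P i ∈ J₀ (B k₀) := fun i =>
    ⟨by simpa using posSemidef_vecMulVec_self_star (w i), hw i⟩
  have hPF : ∀ i, P i ∈ F := fun i =>
    (hface _ (hJK (hPJ i)) _ (hJK (sum_mem_J₀ _ fun j _ => hPJ j))
      (by rw [Finset.add_sum_erase _ _ (Finset.mem_univ i)]; exact hXF)).1
  have hPG : ∀ i, P i ∈ G := fun i => hJG ⟨hPF i, hPJ i⟩
  have hPB : ∀ i k, 0 ≤ (B k * P i).trace := by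
    intro i k
    rcases eq_or_ne k k₀ with rfl | hk
    · exact (hPJ i).2.ge
    · exact hJB k hk _ ⟨hPF i, hPJ i⟩
  have hPQ : ∀ i, (Q * P i).trace = t * (H * P i).trace := by
    have hgap : ∀ i ∈ Finset.univ, 0 ≤ (Q * P i).trace - t * (H * P i).trace := fun i _ =>
      sub_nonneg.2 (le_trace_mul_of_sub_sub_sum_eq hLag (fun k => mul_nonneg (hy k) (hPB i k))
        (hY _ ⟨hPF i, hPG i⟩))
    have hsum : ∑ i, ((Q * P i).trace - t * (H * P i).trace) = 0 := by
      rw [Finset.sum_sub_distrib, ← Finset.mul_sum, ← trace_sum, ← trace_sum, ← Matrix.mul_sum,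
        ← Matrix.mul_sum, hXQ, hXH, mul_one, sub_self]
    exact fun i => sub_eq_zero.1 ((Finset.sum_eq_zero_iff_of_nonneg hgap).1 hsum i
      (Finset.mem_univ i))
  obtain ⟨i, -, hi⟩ : ∃ i ∈ Finset.univ, (0 : ℝ) < (H * P i).trace := by
    refine Finset.exists_lt_of_sum_lt ?_
    rw [← trace_sum, ← Matrix.mul_sum, hXH, Finset.sum_const_zero]
    exact one_pos
  have hscale : vecMulVec ((√(H * P i).trace)⁻¹ • w i) ((√(H * P i).trace)⁻¹ • w i) =
      ((H * P i).trace)⁻¹ • P i := by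
    rw [vecMulVec_smul, smul_vecMulVec, smul_smul, ← mul_inv, Real.mul_self_sqrt hi.le]
  refine ⟨(√(H * P i).trace)⁻¹ • w i, ?_⟩
  simp only [hscale, Matrix.mul_smul, trace_smul, smul_eq_mul, hPQ i, inv_mul_cancel₀ hi.ne']
  refine ⟨hGcone _ (inv_nonneg.2 hi.le) _ (hPG i), fun k => ?_, trivial, ?_⟩
  · exact mul_nonneg (inv_nonneg.2 hi.le) (hPB i k)
  · field_simp

end ConicProgram

theorem stmt_0_general (n m : ℕ)
    (K G FK : Set (Matrix (Fin n) (Fin n) ℝ))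
    (Q H : Matrix (Fin n) (Fin n) ℝ) (B : Fin m → Matrix (Fin n) (Fin n) ℝ)
    -- G is a closed convex cone contained in K
    (hGpsd : ∀ X ∈ G, X.PosSemidef) (hGconv : Convex ℝ G)
    (hGcone : ∀ (c : ℝ), 0 ≤ c → ∀ X ∈ G, c • X ∈ G)
    -- FK is a face of K with G ⊆ FK
    (hFKface : ∀ X ∈ K, ∀ Y ∈ K, X + Y ∈ FK → X ∈ FK ∧ Y ∈ FK)
    (hGFK : G ⊆ FK)
    -- (C1): if COP(G,Q,H) has an optimal solution then it has a rank-1 optimal solution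
    (hC1 : (∃ Xs ∈ G, (H * Xs).trace = 1 ∧
              ∀ X ∈ G, (H * X).trace = 1 → (Q * Xs).trace ≤ (Q * X).trace) →
           ∃ x : Fin n → ℝ, vecMulVec x x ∈ G ∧ (H * vecMulVec x x).trace = 1 ∧
              ∀ X ∈ G, (H * X).trace = 1 → (Q * vecMulVec x x).trace ≤ (Q * X).trace)
    -- (C2)
    (hC2 : ∀ k, {X : Matrix (Fin n) (Fin n) ℝ | X.PosSemidef ∧ (B k * X).trace = 0} ⊆ K ∧
      FK ∩ {X | X.PosSemidef ∧ (B k * X).trace = 0} ⊆ G)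
    -- (C3)
    (hC3 : ∀ k l, k ≠ l →
      FK ∩ {X : Matrix (Fin n) (Fin n) ℝ | X.PosSemidef ∧ (B k * X).trace = 0} ⊆
      {X | X.PosSemidef ∧ 0 ≤ (B l * X).trace})
    -- (C4): KKT stationary condition
    (hC4 : ∃ (Xb : Matrix (Fin n) (Fin n) ℝ) (tb : ℝ) (yb : Fin m → ℝ)
        (Yb : Matrix (Fin n) (Fin n) ℝ),
      Xb ∈ FK ∩ G ∧ (∀ k, 0 ≤ (B k * Xb).trace) ∧ (H * Xb).trace = 1 ∧
      (∀ k, 0 ≤ yb k) ∧ (Q - tb • H - ∑ k, yb k • B k = Yb) ∧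
      (∀ X ∈ FK ∩ G, 0 ≤ (Yb * X).trace) ∧
      (∑ k, yb k * (B k * Xb).trace) = 0 ∧ (Yb * Xb).trace = 0) :
    -- Conclusion: COP(G ∩ J_+(ℬ), Q, H) has a rank-1 optimal solution
    ∃ x : Fin n → ℝ, vecMulVec x x ∈ G ∧ (∀ k, 0 ≤ (B k * vecMulVec x x).trace) ∧
      (H * vecMulVec x x).trace = 1 ∧
      ∀ X ∈ G, (∀ k, 0 ≤ (B k * X).trace) → (H * X).trace = 1 →
        (Q * vecMulVec x x).trace ≤ (Q * X).trace := by
  obtain ⟨Xb, t, y, Y, ⟨-, hXbG⟩, hXbB, hXbH, hy, hLag, hY, hcomp, hYXb⟩ := hC4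
  suffices h : ∃ x : Fin n → ℝ, vecMulVec x x ∈ G ∧ (∀ k, 0 ≤ (B k * vecMulVec x x).trace) ∧
      (H * vecMulVec x x).trace = 1 ∧ (Q * vecMulVec x x).trace = t by
    obtain ⟨x, hxG, hxB, hxH, hxQ⟩ := h
    refine ⟨x, hxG, hxB, hxH, fun X hXG hXB hXH => hxQ ▸ ?_⟩
    simpa [hXH] using le_trace_mul_of_sub_sub_sum_eq hLag (fun k => mul_nonneg (hy k) (hXB k))
      (hY X ⟨hGFK hXG, hXG⟩)
  have hrankOne := fun X (hXG : X ∈ G) k₀ (hk₀ : (B k₀ * X).trace = 0) =>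
    exists_vecMulVec_of_mem_J₀ hGcone hFKface (hC2 k₀).1 (hC2 k₀).2
      (fun l hl _ hX => (hC3 k₀ l hl.symm hX).2) hy hLag hY (hGFK hXG) ⟨hGpsd X hXG, hk₀⟩
  have hQXb : (Q * Xb).trace = t := by
    rw [trace_mul_eq_of_sub_sub_sum_eq hLag, hXbH, hcomp, hYXb]; ring
  by_cases htight : ∃ k₀, (B k₀ * Xb).trace = 0
  · obtain ⟨k₀, hk₀⟩ := htight
    exact hrankOne Xb hXbG k₀ hk₀ hXbH hQXb
  push Not at htight
  have hy0 : ∀ k, y k = 0 := eq_zero_of_sum_mul_eq_zero hy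
    (fun k => (hXbB k).lt_of_ne' (htight k)) hcomp
  have hGopt : ∀ X ∈ G, (H * X).trace = 1 → t ≤ (Q * X).trace := fun X hXG hXH => by
    simpa [hXH] using le_trace_mul_of_sub_sub_sum_eq hLag (fun k => by simp [hy0 k])
      (hY X ⟨hGFK hXG, hXG⟩)
  obtain ⟨x, hxG, hxH, hxopt⟩ := hC1 ⟨Xb, hXbG, hXbH, fun X hXG hXH => hQXb ▸ hGopt X hXG hXH⟩
  have hxQ : (Q * vecMulVec x x).trace = t :=
    le_antisymm (hQXb ▸ hxopt Xb hXbG hXbH) (hGopt _ hxG hxH)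
  by_cases hxB : ∀ k, 0 ≤ (B k * vecMulVec x x).trace
  · exact ⟨x, hxG, hxB, hxH, hxQ⟩
  push Not at hxB
  obtain ⟨k₀, hk₀⟩ := hxB
  obtain ⟨X, hXseg, hXk₀⟩ := exists_mem_segment_trace_mul_eq_zero hk₀.le (hXbB k₀)
  exact hrankOne X (hGconv.segment_subset hxG hXbG hXseg) k₀ hXk₀
    (trace_mul_eq_of_mem_segment hXseg hxH hXbH) (trace_mul_eq_of_mem_segment hXseg hxQ hQXb)

/-- Main theorem (Theorem 3.1 / `theorem:main1`). -/
theorem stmt_0 (n m : ℕ) (hn : 1 ≤ n) (hm : 1 ≤ m)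
    (K G FK : Set (Matrix (Fin n) (Fin n) ℝ))
    (Q H : Matrix (Fin n) (Fin n) ℝ) (B : Fin m → Matrix (Fin n) (Fin n) ℝ)
    (hQsym : Q.IsSymm) (hHsym : H.IsSymm) (hBsym : ∀ k, (B k).IsSymm)
    -- K is a closed convex cone contained in S^n_+
    (hKpsd : ∀ X ∈ K, X.PosSemidef) (hKclosed : IsClosed K) (hKconv : Convex ℝ K)
    (hKcone : ∀ (c : ℝ), 0 ≤ c → ∀ X ∈ K, c • X ∈ K)
    -- G is a closed convex cone contained in K
    (hGpsd : ∀ X ∈ G, X.PosSemidef) (hGclosed : IsClosed G) (hGconv : Convex ℝ G)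
    (hGcone : ∀ (c : ℝ), 0 ≤ c → ∀ X ∈ G, c • X ∈ G)
    (hGK : G ⊆ K)
    -- FK is a face of K with G ⊆ FK
    (hFKsub : FK ⊆ K) (hFKconv : Convex ℝ FK)
    (hFKcone : ∀ (c : ℝ), 0 ≤ c → ∀ X ∈ FK, c • X ∈ FK)
    (hFKface : ∀ X ∈ K, ∀ Y ∈ K, X + Y ∈ FK → X ∈ FK ∧ Y ∈ FK)
    (hGFK : G ⊆ FK)
    -- (C1): if COP(G,Q,H) has an optimal solution then it has a rank-1 optimal solution
    (hC1 : (∃ Xs ∈ G, (H * Xs).trace = 1 ∧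
              ∀ X ∈ G, (H * X).trace = 1 → (Q * Xs).trace ≤ (Q * X).trace) →
           ∃ x : Fin n → ℝ, vecMulVec x x ∈ G ∧ (H * vecMulVec x x).trace = 1 ∧
              ∀ X ∈ G, (H * X).trace = 1 → (Q * vecMulVec x x).trace ≤ (Q * X).trace)
    -- (C2)
    (hC2 : ∀ k, {X : Matrix (Fin n) (Fin n) ℝ | X.PosSemidef ∧ (B k * X).trace = 0} ⊆ K ∧
      FK ∩ {X | X.PosSemidef ∧ (B k * X).trace = 0} ⊆ G)
    -- (C3)
    (hC3 : ∀ k l, k ≠ l →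
      FK ∩ {X : Matrix (Fin n) (Fin n) ℝ | X.PosSemidef ∧ (B k * X).trace = 0} ⊆
      {X | X.PosSemidef ∧ 0 ≤ (B l * X).trace})
    -- (C4): KKT stationary condition
    (hC4 : ∃ (Xb : Matrix (Fin n) (Fin n) ℝ) (tb : ℝ) (yb : Fin m → ℝ)
        (Yb : Matrix (Fin n) (Fin n) ℝ),
      Xb ∈ FK ∩ G ∧ (∀ k, 0 ≤ (B k * Xb).trace) ∧ (H * Xb).trace = 1 ∧
      (∀ k, 0 ≤ yb k) ∧ (Q - tb • H - ∑ k, yb k • B k = Yb) ∧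
      (∀ X ∈ FK ∩ G, 0 ≤ (Yb * X).trace) ∧
      (∑ k, yb k * (B k * Xb).trace) = 0 ∧ (Yb * Xb).trace = 0) :
    -- Conclusion: COP(G ∩ J_+(ℬ), Q, H) has a rank-1 optimal solution
    ∃ x : Fin n → ℝ, vecMulVec x x ∈ G ∧ (∀ k, 0 ≤ (B k * vecMulVec x x).trace) ∧
      (H * vecMulVec x x).trace = 1 ∧
      ∀ X ∈ G, (∀ k, 0 ≤ (B k * X).trace) → (H * X).trace = 1 →
        (Q * vecMulVec x x).trace ≤ (Q * X).trace :=
  stmt_0_general n m K G FK Q H B hGpsd hGconv hGcone hFKface hGFK hC1 hC2 hC3 hC4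
end

section
/- Let B ∈ S^n and let X̄ ∈ S^n_+ with rank(X̄) = r ≥ 1. If ⟨B, X̄⟩ ≥ 0, then there exist x_1, …, x_r ∈ ℝ^n such that X̄ = Σ_{i=1}^r x_i·x_iᵀ and x_iᵀ·B·x_i ≥ 0 for every i ∈ {1,…,r}. If moreover ⟨B, X̄⟩ = 0, then the x_i can be chosen so that X̄ = Σ_{i=1}^r x_i·x_iᵀ and x_iᵀ·B·x_i = 0 for every i ∈ {1,…,r}. -/
/-!
Write `X̄ = ∑ᵢ pᵢ pᵢᵀ` with `r = rank X̄` terms (spectral theorem). A rotation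
`(a, b) ↦ (cos t • a + sin t • b, cos t • b - sin t • a)` preserves `a aᵀ + b bᵀ`, hence also
`aᵀ B a + bᵀ B b = ⟨B, a aᵀ + b bᵀ⟩`, and by the intermediate value theorem on `[0, π/2]` it moves
`aᵀ B a` to any value between `aᵀ B a` and `bᵀ B b`. So whenever the values `pᵢᵀ B pᵢ` are not all
equal to their mean `⟨B, X̄⟩ / r`, one rotation makes one of them equal to the mean; it is then set
aside and the argument is repeated on the remaining terms.
-/

open Matrix Finset
open scoped ComplexOrder

theorem Matrix.PosSemidef.exists_eq_sum_vecMulVec_star_of_rank_eq {𝕜 n : Type*} [RCLike 𝕜]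
    [Fintype n] [DecidableEq n] {A : Matrix n n 𝕜} (hA : A.PosSemidef) {r : ℕ}
    (hr : A.rank = r) :
    ∃ v : Fin r → n → 𝕜, A = ∑ i, vecMulVec (v i) (star (v i)) := by
  set ev := hA.isHermitian.eigenvalues
  set U := (hA.isHermitian.eigenvectorUnitary : Matrix n n 𝕜)
  let g : n → n → 𝕜 := fun k i => (Real.sqrt (ev k) : 𝕜) * U i k
  have hA_eq : A = ∑ k, vecMulVec (g k) (star (g k)) := by
    conv_lhs => rw [hA.isHermitian.spectral_theorem]
    ext i j
    simp only [Unitary.conjStarAlgAut_apply, mul_apply, diagonal_apply, mul_ite, mul_zero,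
      sum_ite_eq', mem_univ, if_true, star_apply, Matrix.sum_apply, vecMulVec_apply, g,
      Pi.star_apply, star_mul', Function.comp_apply, RCLike.star_def, RCLike.conj_ofReal]
    refine sum_congr rfl fun k _ => ?_
    have hsqrt := congrArg (RCLike.ofReal (K := 𝕜)) (Real.mul_self_sqrt (hA.eigenvalues_nonneg k))
    push_cast at hsqrt
    linear_combination (U i k * (starRingEnd 𝕜) (U j k)) * hsqrt.symm
  have hcard : Fintype.card {k // ev k ≠ 0} = r := by
    rw [← hA.isHermitian.rank_eq_card_non_zero_eigs, hr]
  let e := Fintype.equivFinOfCardEq hcard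
  refine ⟨fun i => g (e.symm i), ?_⟩
  rw [hA_eq, e.symm.sum_comp (fun k : {k // ev k ≠ 0} => vecMulVec (g k) (star (g k))),
    ← Fintype.sum_subtype_add_sum_subtype (fun k => ev k ≠ 0), add_eq_left]
  refine sum_eq_zero fun k _ => ?_
  ext i j
  simp [g, vecMulVec_apply, not_not.1 k.2]

theorem Finset.sum_comp_update_update {κ V M : Type*} [Fintype κ] [DecidableEq κ]
    [AddCommMonoid M] (g : V → M) (p : κ → V) {i j : κ} (hij : i ≠ j) {u v : V}
    (h : g u + g v = g (p i) + g (p j)) :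
    ∑ k, g (Function.update (Function.update p i u) j v k) = ∑ k, g (p k) := by
  have hj : j ∈ univ.erase i := mem_erase.2 ⟨hij.symm, mem_univ j⟩
  rw [← add_sum_erase _ _ (mem_univ i), ← add_sum_erase _ _ hj, ← add_sum_erase _ _ (mem_univ i),
    ← add_sum_erase _ _ hj, ← add_assoc, ← add_assoc, Function.update_self,
    Function.update_of_ne hij, Function.update_self, h]
  congr 1
  refine sum_congr rfl fun k hk => ?_
  obtain ⟨hkj, hk⟩ := mem_erase.1 hk
  rw [Function.update_of_ne hkj, Function.update_of_ne (mem_erase.1 hk).1]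

namespace Matrix

theorem vecMulVec_rotate_add_vecMulVec_rotate {n : Type*} (a b : n → ℝ) (t : ℝ) :
    vecMulVec (Real.cos t • a + Real.sin t • b) (Real.cos t • a + Real.sin t • b) +
      vecMulVec (Real.cos t • b - Real.sin t • a) (Real.cos t • b - Real.sin t • a) =
    vecMulVec a a + vecMulVec b b := by
  ext i j
  simp only [add_apply, vecMulVec_apply, Pi.add_apply, Pi.sub_apply, Pi.smul_apply, smul_eq_mul]
  linear_combination (a i * a j + b i * b j) * Real.sin_sq_add_cos_sq t

variable {n : Type*} [Fintype n]

theorem dotProduct_mulVec_self_eq_trace (B : Matrix n n ℝ) (x : n → ℝ) :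
    x ⬝ᵥ B *ᵥ x = (B * vecMulVec x x).trace := by
  rw [mul_vecMulVec, trace_vecMulVec, dotProduct_comm]

theorem sum_dotProduct_mulVec_self_eq_trace {κ : Type*} [Fintype κ] (B : Matrix n n ℝ)
    (p : κ → n → ℝ) :
    ∑ i, p i ⬝ᵥ B *ᵥ p i = (B * ∑ i, vecMulVec (p i) (p i)).trace := by
  simp only [dotProduct_mulVec_self_eq_trace, Matrix.mul_sum, trace_sum]

theorem exists_vecMulVec_add_eq_and_dotProduct_mulVec_eq (B : Matrix n n ℝ) {a b : n → ℝ}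
    {δ : ℝ} (ha : a ⬝ᵥ B *ᵥ a ≤ δ) (hb : δ ≤ b ⬝ᵥ B *ᵥ b) :
    ∃ u v : n → ℝ, vecMulVec u u + vecMulVec v v = vecMulVec a a + vecMulVec b b ∧
      u ⬝ᵥ B *ᵥ u = δ := by
  let f : ℝ → ℝ := fun t =>
    (Real.cos t • a + Real.sin t • b) ⬝ᵥ B *ᵥ (Real.cos t • a + Real.sin t • b)
  have hf : Continuous f := by fun_prop
  obtain ⟨t, -, ht⟩ := intermediate_value_Icc (by positivity : 0 ≤ Real.pi / 2) hf.continuousOn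
    (by simpa [f] using And.intro ha hb)
  exact ⟨_, _, vecMulVec_rotate_add_vecMulVec_rotate a b t, ht⟩

theorem exists_sum_vecMulVec_eq_and_exists_dotProduct_mulVec_eq {κ : Type*} [Fintype κ]
    [DecidableEq κ] [Nonempty κ] (B : Matrix n n ℝ) (p : κ → n → ℝ) {δ : ℝ}
    (hp : ∑ i, p i ⬝ᵥ B *ᵥ p i = Fintype.card κ * δ) :
    ∃ q : κ → n → ℝ, ∑ i, vecMulVec (q i) (q i) = ∑ i, vecMulVec (p i) (p i) ∧
      ∃ i, q i ⬝ᵥ B *ᵥ q i = δ := by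
  have hδ : ∑ _i : κ, δ = Fintype.card κ * δ := by simp
  obtain ⟨i, -, hi⟩ := exists_le_of_sum_le univ_nonempty (hp.trans hδ.symm).le
  obtain ⟨j, -, hj⟩ := exists_le_of_sum_le univ_nonempty (hδ.trans hp.symm).le
  by_cases hij : i = j
  · exact ⟨p, rfl, i, le_antisymm hi (hij ▸ hj)⟩
  obtain ⟨u, v, huv, hu⟩ := exists_vecMulVec_add_eq_and_dotProduct_mulVec_eq B hi hj
  refine ⟨Function.update (Function.update p i u) j v,
    sum_comp_update_update (fun x => vecMulVec x x) p hij huv, i, ?_⟩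
  rwa [Function.update_of_ne hij, Function.update_self]

theorem exists_sum_vecMulVec_eq_and_forall_dotProduct_mulVec_eq (B : Matrix n n ℝ) {δ : ℝ} :
    ∀ {m : ℕ} (p : Fin m → n → ℝ), ∑ i, p i ⬝ᵥ B *ᵥ p i = m * δ →
      ∃ x : Fin m → n → ℝ, ∑ i, vecMulVec (x i) (x i) = ∑ i, vecMulVec (p i) (p i) ∧
        ∀ i, x i ⬝ᵥ B *ᵥ x i = δ
  | 0, p, _ => ⟨p, rfl, fun i => i.elim0⟩
  | m + 1, p, hp => by
    obtain ⟨q, hqp, i, hi⟩ :=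
      exists_sum_vecMulVec_eq_and_exists_dotProduct_mulVec_eq B p (by simpa using hp)
    have hq : ∑ k, q (i.succAbove k) ⬝ᵥ B *ᵥ q (i.succAbove k) = m * δ := by
      have hsplit := Fin.sum_univ_succAbove (fun k => q k ⬝ᵥ B *ᵥ q k) i
      rw [sum_dotProduct_mulVec_self_eq_trace, hqp, ← sum_dotProduct_mulVec_self_eq_trace, hp,
        hi] at hsplit
      push_cast at hsplit
      linarith
    obtain ⟨x, hxq, hx⟩ := exists_sum_vecMulVec_eq_and_forall_dotProduct_mulVec_eq B _ hq
    refine ⟨Fin.cons (q i) x, ?_, Fin.cases hi hx⟩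
    rw [Fin.sum_univ_succ, ← hqp, Fin.sum_univ_succAbove _ i]
    simp only [Fin.cons_zero, Fin.cons_succ, hxq]

theorem exists_sum_vecMulVec_eq_and_forall_dotProduct_mulVec_eq_mean (B : Matrix n n ℝ)
    {m : ℕ} (p : Fin m → n → ℝ) :
    ∃ x : Fin m → n → ℝ, ∑ i, vecMulVec (x i) (x i) = ∑ i, vecMulVec (p i) (p i) ∧
      ∀ i, x i ⬝ᵥ B *ᵥ x i = (∑ j, p j ⬝ᵥ B *ᵥ p j) / m := by
  rcases m with _ | m
  · exact ⟨p, rfl, fun i => i.elim0⟩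
  · exact exists_sum_vecMulVec_eq_and_forall_dotProduct_mulVec_eq B p
      (mul_div_cancel₀ _ (by positivity)).symm

end Matrix

theorem stmt_2_general (n : ℕ) (B Xb : Matrix (Fin n) (Fin n) ℝ)
    (hXb : Xb.PosSemidef) (r : ℕ) (hrank : Xb.rank = r)
    (hBX : 0 ≤ (B * Xb).trace) :
    (∃ x : Fin r → Fin n → ℝ,
      Xb = ∑ i, vecMulVec (x i) (x i) ∧
      ∀ i, 0 ≤ dotProduct (x i) (B.mulVec (x i))) ∧
    ((B * Xb).trace = 0 →
      ∃ x : Fin r → Fin n → ℝ,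
        Xb = ∑ i, vecMulVec (x i) (x i) ∧
        ∀ i, dotProduct (x i) (B.mulVec (x i)) = 0) := by
  obtain ⟨p, rfl⟩ := hXb.exists_eq_sum_vecMulVec_star_of_rank_eq hrank
  simp only [star_trivial, ← sum_dotProduct_mulVec_self_eq_trace] at hBX ⊢
  obtain ⟨x, hxp, hx⟩ := exists_sum_vecMulVec_eq_and_forall_dotProduct_mulVec_eq_mean B p
  refine ⟨⟨x, hxp.symm, fun i => hx i ▸ div_nonneg hBX r.cast_nonneg⟩,
    fun h0 => ⟨x, hxp.symm, fun i => by rw [hx i, h0, zero_div]⟩⟩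

/-- rank-one decomposition lemma (Ye–Zhang / Sturm–Zhang). -/
theorem stmt_2 (n : ℕ) (B Xb : Matrix (Fin n) (Fin n) ℝ) (hBsym : B.IsSymm)
    (hXb : Xb.PosSemidef) (r : ℕ) (hrank : Xb.rank = r) (hr1 : 1 ≤ r)
    (hBX : 0 ≤ (B * Xb).trace) :
    (∃ x : Fin r → Fin n → ℝ,
      Xb = ∑ i, vecMulVec (x i) (x i) ∧
      ∀ i, 0 ≤ dotProduct (x i) (B.mulVec (x i))) ∧
    ((B * Xb).trace = 0 →
      ∃ x : Fin r → Fin n → ℝ,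
        Xb = ∑ i, vecMulVec (x i) (x i) ∧
        ∀ i, dotProduct (x i) (B.mulVec (x i)) = 0) :=
  stmt_2_general n B Xb hXb r hrank hBX
end

section
/- Let n ≥ 2, let F₀ ∈ S^n_+, and define F = {X ∈ S^n_+ : ⟨F₀,X⟩ = 0} and L₁(F) = {u ∈ ℝ^{n-1} : F₀·(u;1) = 0}. Let B, B' ∈ S^n. If L₁(F) ∩ B_≤ is nonempty and L₁(F) ∩ B_≤ ⊆ L₁(F) ∩ B'_≥, then F ∩ J_-(B) ⊆ F ∩ J_+(B'); in particular F ∩ J_0(B) ⊆ F ∩ J_+(B'). -/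
open Matrix

noncomputable section

/-- `q(u,A) = (u;1)ᵀ A (u;1)`. -/
def qf {m : ℕ} (A : Matrix (Fin (m+1)) (Fin (m+1)) ℝ) (u : Fin m → ℝ) : ℝ :=
  dotProduct (Fin.snoc u 1) (A.mulVec (Fin.snoc u 1))

/-!
A positive semidefinite `X` with `⟨F₀, X⟩ = 0` is a sum of rank-one matrices `v vᵀ` with every `v`
in `ker F₀`, so it suffices to show `∑ vᵀBv ≤ 0 → ∑ vᵀB'v ≥ 0` for finitely many `v ∈ ker F₀`.
For a single vector this is the hypothesis after homogenization: a `v` with nonzero last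
coordinate is a multiple of some `(u;1)`, and one with last coordinate zero is a limit of such
vectors along which `vᵀBv` stays nonpositive. A sum is shortened by rotating a pair `v, w` with
`vᵀBv > 0 > wᵀBw` in the plane they span: rotations preserve `vᵀMv + wᵀMw` for every `M`, and a
suitable angle makes the rotated `v` isotropic for `B`.
-/

namespace QuadraticMap

variable {V : Type*} [AddCommGroup V] [Module ℝ V] (Q : QuadraticForm ℝ V)

theorem map_smul_add_smul (a b : ℝ) (x y : V) :
    Q (a • x + b • y) = a ^ 2 * Q x + a * b * polar Q x y + b ^ 2 * Q y := by
  have h : Q (a • x + b • y) = Q (a • x) + Q (b • y) + polar Q (a • x) (b • y) := by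
    rw [polar]; abel
  rw [h, QuadraticMap.map_smul, QuadraticMap.map_smul, polar_smul_left, polar_smul_right]
  simp only [smul_eq_mul]
  ring

theorem map_add_smul (t : ℝ) (x y : V) :
    Q (x + t • y) = Q x + t * polar Q x y + t ^ 2 * Q y := by
  simpa using Q.map_smul_add_smul 1 t x y

theorem map_rotate_add_map_rotate (c s : ℝ) (x y : V) :
    Q (c • x + s • y) + Q ((-s) • x + c • y) = (c ^ 2 + s ^ 2) * (Q x + Q y) := by
  rw [map_smul_add_smul, map_smul_add_smul]; ring

theorem exists_map_cos_smul_add_sin_smul_eq_zero {x y : V} (hx : 0 ≤ Q x) (hy : Q y ≤ 0) :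
    ∃ θ : ℝ, Q (Real.cos θ • x + Real.sin θ • y) = 0 := by
  have hcont : Continuous fun θ : ℝ => Q (Real.cos θ • x + Real.sin θ • y) := by
    simp_rw [map_smul_add_smul]; fun_prop
  obtain ⟨θ, -, hθ⟩ := intermediate_value_Icc' Real.pi_div_two_pos.le hcont.continuousOn
    (show (0 : ℝ) ∈ Set.Icc _ _ by simpa using ⟨hy, hx⟩)
  exact ⟨θ, hθ⟩

theorem sum_map_nonneg_of_sum_map_nonpos {Q Q' : QuadraticForm ℝ V} {K : Submodule ℝ V}
    (h : ∀ x ∈ K, Q x ≤ 0 → 0 ≤ Q' x) (S : Multiset V) (hS : ∀ x ∈ S, x ∈ K)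
    (hsum : (S.map Q).sum ≤ 0) : 0 ≤ (S.map Q').sum := by
  induction hn : Multiset.card S using Nat.strong_induction_on generalizing S with
  | _ n ih =>
  by_cases hneg : ∀ x ∈ S, Q x ≤ 0
  · refine Multiset.sum_nonneg fun _ hy => ?_
    obtain ⟨x, hx, rfl⟩ := Multiset.mem_map.1 hy
    exact h x (hS x hx) (hneg x hx)
  push Not at hneg
  obtain ⟨x, hxS, hx⟩ := hneg
  obtain ⟨R, rfl⟩ := Multiset.exists_cons_of_mem hxS
  obtain ⟨y, hyR, hy⟩ : ∃ y ∈ R, Q y < 0 := by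
    by_contra! hR
    have := Multiset.sum_nonneg (s := R.map Q) (by simpa using hR)
    simp only [Multiset.map_cons, Multiset.sum_cons] at hsum
    linarith
  obtain ⟨T, rfl⟩ := Multiset.exists_cons_of_mem hyR
  -- rotate `(x, y)` so that the image of `x` is `Q`-isotropic; both sums are unchanged
  obtain ⟨θ, hθ⟩ := Q.exists_map_cos_smul_add_sin_smul_eq_zero hx.le hy.le
  set w := Real.cos θ • x + Real.sin θ • y
  set z := (-Real.sin θ) • x + Real.cos θ • y
  have hrot : ∀ P : QuadraticForm ℝ V, P w + P z = P x + P y := fun P => by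
    rw [map_rotate_add_map_rotate, Real.cos_sq_add_sin_sq, one_mul]
  have hxK := hS x (by simp)
  have hyK := hS y (by simp)
  have hw := h w (K.add_mem (K.smul_mem _ hxK) (K.smul_mem _ hyK)) hθ.le
  have hz := ih _ (by simp [← hn]) (z ::ₘ T)
    (by simpa using ⟨K.add_mem (K.smul_mem _ hxK) (K.smul_mem _ hyK),
      fun a ha => hS a (by simp [ha])⟩)
    (by simp only [Multiset.map_cons, Multiset.sum_cons] at hsum ⊢; linarith [hrot Q]) rfl
  simp only [Multiset.map_cons, Multiset.sum_cons] at hz ⊢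
  linarith [hrot Q']

variable {m : ℕ} {Q Q' : QuadraticForm ℝ (Fin (m + 1) → ℝ)} {K : Submodule ℝ (Fin (m + 1) → ℝ)}

theorem map_nonneg_of_snoc_one_of_last_ne_zero
    (h : ∀ u : Fin m → ℝ, Fin.snoc u 1 ∈ K → Q (Fin.snoc u 1) ≤ 0 → 0 ≤ Q' (Fin.snoc u 1))
    {x : Fin (m + 1) → ℝ} (hxK : x ∈ K) (hlast : x (Fin.last m) ≠ 0) (hx : Q x ≤ 0) :
    0 ≤ Q' x := by
  set s := x (Fin.last m)
  have hsnoc : Fin.snoc (Fin.init (s⁻¹ • x)) 1 = s⁻¹ • x := by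
    conv_rhs => rw [← Fin.snoc_init_self (s⁻¹ • x)]
    simp [s, hlast]
  have hs : 0 < s⁻¹ * s⁻¹ := mul_self_pos.2 (inv_ne_zero hlast)
  have key := h (Fin.init (s⁻¹ • x))
  rw [hsnoc, QuadraticMap.map_smul, QuadraticMap.map_smul, smul_eq_mul, smul_eq_mul] at key
  exact nonneg_of_mul_nonneg_right
    (key (K.smul_mem _ hxK) (mul_nonpos_of_nonneg_of_nonpos hs.le hx)) hs

theorem map_nonneg_of_snoc_one
    (h : ∀ u : Fin m → ℝ, Fin.snoc u 1 ∈ K → Q (Fin.snoc u 1) ≤ 0 → 0 ≤ Q' (Fin.snoc u 1))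
    (hne : ∃ u : Fin m → ℝ, Fin.snoc u 1 ∈ K ∧ Q (Fin.snoc u 1) ≤ 0)
    {x : Fin (m + 1) → ℝ} (hxK : x ∈ K) (hx : Q x ≤ 0) : 0 ≤ Q' x := by
  by_cases hlast : x (Fin.last m) ≠ 0
  · exact map_nonneg_of_snoc_one_of_last_ne_zero h hxK hlast hx
  -- approach `x` along `x + ε • e` with `e = ±(u;1)`, the sign chosen so that `Q` stays `≤ 0`
  obtain ⟨u, huK, hu⟩ := hne
  obtain ⟨e, heK, helast, he, hpolar⟩ :
      ∃ e ∈ K, e (Fin.last m) ≠ 0 ∧ Q e ≤ 0 ∧ polar Q x e ≤ 0 := by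
    rcases le_total (polar Q x (Fin.snoc u 1)) 0 with hp | hp
    · exact ⟨_, huK, by simp, hu, hp⟩
    · exact ⟨-Fin.snoc u 1, K.neg_mem huK, by simp, by rwa [QuadraticMap.map_neg],
        by rw [polar_neg_right]; linarith⟩
  have hpos : ∀ ε : ℝ, 0 < ε → 0 ≤ Q' (x + ε • e) := fun ε hε => by
    refine map_nonneg_of_snoc_one_of_last_ne_zero h (K.add_mem hxK (K.smul_mem ε heK)) ?_ ?_
    · simpa [not_not.1 hlast] using ⟨hε.ne', helast⟩
    · rw [map_add_smul]
      nlinarith [mul_nonpos_of_nonneg_of_nonpos hε.le hpolar,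
        mul_nonpos_of_nonneg_of_nonpos (sq_nonneg ε) he]
  have hcont : Continuous fun ε : ℝ => Q' (x + ε • e) := by
    simp_rw [map_add_smul]; fun_prop
  simpa using ge_of_tendsto ((hcont.tendsto 0).mono_left nhdsWithin_le_nhds)
    (eventually_nhdsWithin_of_forall (s := Set.Ioi 0) hpos)

end QuadraticMap

namespace Matrix

variable {n : Type*} [Fintype n] [DecidableEq n]

theorem toQuadraticForm'_apply (M : Matrix n n ℝ) (v : n → ℝ) :
    M.toQuadraticForm' v = v ⬝ᵥ M *ᵥ v := by
  simp [toQuadraticForm', toLinearMap₂'_apply']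

theorem PosSemidef.exists_trace_mul_eq_sum {X : Matrix n n ℝ} (hX : X.PosSemidef) :
    ∃ (k : ℕ) (v : Fin k → n → ℝ), ∀ M : Matrix n n ℝ,
      (M * X).trace = ∑ i, M.toQuadraticForm' (v i) := by
  obtain ⟨k, v, rfl⟩ := posSemidef_iff_eq_sum_vecMulVec.1 hX
  refine ⟨k, v, fun M => ?_⟩
  simp [Finset.mul_sum, trace_sum, mul_vecMulVec, trace_vecMulVec, toQuadraticForm'_apply,
    dotProduct_comm]

theorem trace_mul_nonneg_of_forall_mem_ker {F B B' X : Matrix n n ℝ} (hF : F.PosSemidef)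
    (h : ∀ x ∈ LinearMap.ker F.mulVecLin, B.toQuadraticForm' x ≤ 0 → 0 ≤ B'.toQuadraticForm' x)
    (hX : X.PosSemidef) (hFX : (F * X).trace = 0) (hBX : (B * X).trace ≤ 0) :
    0 ≤ (B' * X).trace := by
  obtain ⟨k, v, hv⟩ := hX.exists_trace_mul_eq_sum
  have hker : ∀ i, v i ∈ LinearMap.ker F.mulVecLin := fun i => by
    rw [hv] at hFX
    have := (Finset.sum_eq_zero_iff_of_nonneg fun j _ => ?_).1 hFX i (Finset.mem_univ i)
    · exact (hF.dotProduct_mulVec_zero_iff (v i)).1 (by simpa [toQuadraticForm'_apply] using this)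
    · simpa [toQuadraticForm'_apply] using hF.dotProduct_mulVec_nonneg (v j)
  rw [hv] at hBX ⊢
  have := QuadraticMap.sum_map_nonneg_of_sum_map_nonpos h (Finset.univ.val.map v)
    (by simpa using hker)
    (by simpa only [Multiset.map_map, Function.comp_def, Finset.sum_map_val] using hBX)
  simpa only [Multiset.map_map, Function.comp_def, Finset.sum_map_val] using this

end Matrix

theorem stmt_3_general (m : ℕ)
    (F0 B B' : Matrix (Fin (m+1)) (Fin (m+1)) ℝ)
    (hF0 : F0.PosSemidef)
    (hne : {u : Fin m → ℝ | F0.mulVec (Fin.snoc u 1) = 0 ∧ qf B u ≤ 0}.Nonempty)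
    (hsub : {u : Fin m → ℝ | F0.mulVec (Fin.snoc u 1) = 0 ∧ qf B u ≤ 0} ⊆
            {u : Fin m → ℝ | F0.mulVec (Fin.snoc u 1) = 0 ∧ 0 ≤ qf B' u}) :
    ({X : Matrix (Fin (m+1)) (Fin (m+1)) ℝ | X.PosSemidef ∧ (F0 * X).trace = 0} ∩
        {X | X.PosSemidef ∧ (B * X).trace ≤ 0} ⊆
      {X | X.PosSemidef ∧ (F0 * X).trace = 0} ∩
        {X | X.PosSemidef ∧ 0 ≤ (B' * X).trace}) ∧
    ({X : Matrix (Fin (m+1)) (Fin (m+1)) ℝ | X.PosSemidef ∧ (F0 * X).trace = 0} ∩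
        {X | X.PosSemidef ∧ (B * X).trace = 0} ⊆
      {X | X.PosSemidef ∧ (F0 * X).trace = 0} ∩
        {X | X.PosSemidef ∧ 0 ≤ (B' * X).trace}) := by
  simp only [qf, ← toQuadraticForm'_apply] at hne hsub
  have hpt : ∀ x ∈ LinearMap.ker F0.mulVecLin,
      B.toQuadraticForm' x ≤ 0 → 0 ≤ B'.toQuadraticForm' x :=
    fun x => QuadraticMap.map_nonneg_of_snoc_one (K := LinearMap.ker F0.mulVecLin)
      (fun u hu hBu => (hsub ⟨hu, hBu⟩).2) hne
  have hJ : {X : Matrix (Fin (m+1)) (Fin (m+1)) ℝ | X.PosSemidef ∧ (F0 * X).trace = 0} ∩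
        {X | X.PosSemidef ∧ (B * X).trace ≤ 0} ⊆
      {X | X.PosSemidef ∧ (F0 * X).trace = 0} ∩ {X | X.PosSemidef ∧ 0 ≤ (B' * X).trace} :=
    fun X ⟨⟨hX, hF0X⟩, _, hBX⟩ =>
      ⟨⟨hX, hF0X⟩, hX, trace_mul_nonneg_of_forall_mem_ker hF0 hpt hX hF0X hBX⟩
  exact ⟨hJ, fun X ⟨hF, hX, hBX⟩ => hJ ⟨hF, hX, hBX.le⟩⟩

/-- Lemma 3.1, [ARIMA2024, Lemma 4.3].  Matrices have size `n = m+1`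
with `m ≥ 1`, i.e. `n ≥ 2`. -/
theorem stmt_3 (m : ℕ) (hm : 1 ≤ m)
    (F0 B B' : Matrix (Fin (m+1)) (Fin (m+1)) ℝ)
    (hF0 : F0.PosSemidef) (hBsym : B.IsSymm) (hB'sym : B'.IsSymm)
    (hne : {u : Fin m → ℝ | F0.mulVec (Fin.snoc u 1) = 0 ∧ qf B u ≤ 0}.Nonempty)
    (hsub : {u : Fin m → ℝ | F0.mulVec (Fin.snoc u 1) = 0 ∧ qf B u ≤ 0} ⊆
            {u : Fin m → ℝ | F0.mulVec (Fin.snoc u 1) = 0 ∧ 0 ≤ qf B' u}) :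
    ({X : Matrix (Fin (m+1)) (Fin (m+1)) ℝ | X.PosSemidef ∧ (F0 * X).trace = 0} ∩
        {X | X.PosSemidef ∧ (B * X).trace ≤ 0} ⊆
      {X | X.PosSemidef ∧ (F0 * X).trace = 0} ∩
        {X | X.PosSemidef ∧ 0 ≤ (B' * X).trace}) ∧
    ({X : Matrix (Fin (m+1)) (Fin (m+1)) ℝ | X.PosSemidef ∧ (F0 * X).trace = 0} ∩
        {X | X.PosSemidef ∧ (B * X).trace = 0} ⊆
      {X | X.PosSemidef ∧ (F0 * X).trace = 0} ∩
        {X | X.PosSemidef ∧ 0 ≤ (B' * X).trace}) :=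
  stmt_3_general m F0 B B' hF0 hne hsub
end
end

section
/- Let J ⊆ S^n_+ be a closed convex cone that is ROG, and let Q, H ∈ S^n. With infima taken in the extended reals (inf ∅ = +∞), the value η(J,Q,H) := inf{⟨Q,X⟩ : X ∈ J, ⟨H,X⟩ = 1} satisfies: η(J,Q,H) > −∞ if and only if η(J,Q,H) > −∞ and η(J,Q,H) = inf{⟨Q,X⟩ : X ∈ Γ^n ∩ J, ⟨H,X⟩ = 1}. -/
open Matrix

noncomputable section

private lemma smul_vecMulVec_self {n : ℕ} (a : ℝ) (ha : 0 ≤ a) (x : Fin n → ℝ) :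
    a • vecMulVec x x = vecMulVec (Real.sqrt a • x) (Real.sqrt a • x) := by
  ext i j
  simp only [Matrix.smul_apply, vecMulVec_apply, Pi.smul_apply, smul_eq_mul]
  calc a * (x i * x j) = (Real.sqrt a * Real.sqrt a) * (x i * x j) := by
        rw [Real.mul_self_sqrt ha]
    _ = (Real.sqrt a * x i) * (Real.sqrt a * x j) := by ring

private lemma trace_mul_sum_smul {n : ℕ} {ι : Type*} (A : Matrix (Fin n) (Fin n) ℝ)
    (t : Finset ι) (w : ι → ℝ) (z : ι → Matrix (Fin n) (Fin n) ℝ) :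
    (A * ∑ i ∈ t, w i • z i).trace = ∑ i ∈ t, w i * (A * z i).trace := by
  rw [Finset.mul_sum, Matrix.trace_sum]
  refine Finset.sum_congr rfl fun i _ => ?_
  rw [Matrix.mul_smul, Matrix.trace_smul, smul_eq_mul]

/-- Lemma 4.1 (i): equivalence of a ROG conic program and its rank-one
restriction whenever its value is bounded below.  Infima are taken in `EReal`
(so `sInf ∅ = ⊤ = +∞` and `⊥ = −∞`). -/
theorem stmt_4 (n : ℕ) (J : Set (Matrix (Fin n) (Fin n) ℝ))
    (hJpsd : ∀ X ∈ J, X.PosSemidef) (hJclosed : IsClosed J) (hJconv : Convex ℝ J)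
    (hJcone : ∀ (c : ℝ), 0 ≤ c → ∀ X ∈ J, c • X ∈ J)
    (hROG : J = convexHull ℝ ({X | ∃ x : Fin n → ℝ, X = vecMulVec x x} ∩ J))
    (Q H : Matrix (Fin n) (Fin n) ℝ) (hQsym : Q.IsSymm) (hHsym : H.IsSymm) :
    (⊥ < sInf ((fun X => (((Q * X).trace : ℝ) : EReal)) ''
        {X | X ∈ J ∧ (H * X).trace = 1})) ↔
    ((⊥ < sInf ((fun X => (((Q * X).trace : ℝ) : EReal)) ''
        {X | X ∈ J ∧ (H * X).trace = 1})) ∧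
      sInf ((fun X => (((Q * X).trace : ℝ) : EReal)) ''
        {X | X ∈ J ∧ (H * X).trace = 1}) =
      sInf ((fun X => (((Q * X).trace : ℝ) : EReal)) ''
        {X | (∃ x : Fin n → ℝ, X = vecMulVec x x) ∧ X ∈ J ∧ (H * X).trace = 1})) := by
  classical
  constructor
  · intro hb
    refine ⟨hb, le_antisymm ?_ ?_⟩
    · -- subset direction
      apply sInf_le_sInf
      apply Set.image_mono
      rintro X ⟨_, hXJ, hXH⟩
      exact ⟨hXJ, hXH⟩
    · -- main direction
      apply le_sInf
      rintro v ⟨X, ⟨hXJ, hXH⟩, rfl⟩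
      set q : ℝ := (Q * X).trace with hq
      -- decompose X
      have hXhull : X ∈ convexHull ℝ ({X | ∃ x : Fin n → ℝ, X = vecMulVec x x} ∩ J) :=
        hROG ▸ hXJ
      rw [convexHull_eq] at hXhull
      obtain ⟨ι, t, w, z, hw0, hw1, hz, hXeq⟩ := hXhull
      rw [Finset.centerMass_eq_of_sum_1 _ _ hw1] at hXeq
      set hv : ι → ℝ := fun i => w i * (H * z i).trace with hhv
      set qv : ι → ℝ := fun i => w i * (Q * z i).trace with hqv
      have hsum : ∑ i ∈ t, hv i = 1 := by
        rw [← hXH, ← hXeq, trace_mul_sum_smul]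
      have qsum : ∑ i ∈ t, qv i = q := by
        rw [hq, ← hXeq, trace_mul_sum_smul]
      -- membership helpers
      have hJ0 : (0 : Matrix (Fin n) (Fin n) ℝ) ∈ J := by
        simpa using hJcone 0 le_rfl X hXJ
      have hJadd : ∀ A ∈ J, ∀ B ∈ J, A + B ∈ J := by
        intro A hA B hB
        have hmem : (1/2 : ℝ) • A + (1/2 : ℝ) • B ∈ J :=
          hJconv hA hB (by norm_num) (by norm_num) (by norm_num)
        have h2 := hJcone 2 (by norm_num) _ hmem
        have : (2 : ℝ) • ((1/2 : ℝ) • A + (1/2 : ℝ) • B) = A + B := by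
          rw [smul_add, smul_smul, smul_smul]
          norm_num
        rwa [this] at h2
      -- split indices
      set P : Finset ι := t.filter (fun i => 0 < hv i) with hP
      set N : Finset ι := t.filter (fun i => ¬ 0 < hv i) with hN
      set Y : Matrix (Fin n) (Fin n) ℝ := ∑ i ∈ N, w i • z i with hYdef
      have hYJ : Y ∈ J := by
        refine Finset.sum_induction _ (· ∈ J) (fun a b ha hb => hJadd a ha b hb) hJ0 ?_
        intro i hi
        have hit : i ∈ t := (Finset.mem_filter.mp hi).1
        exact hJcone (w i) (hw0 i hit) _ (hz i hit).2
      have hYH : (H * Y).trace = ∑ i ∈ N, hv i := by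
        rw [hYdef, trace_mul_sum_smul]
      have hYQ : (Q * Y).trace = ∑ i ∈ N, qv i := by
        rw [hYdef, trace_mul_sum_smul]
      set hNs : ℝ := ∑ i ∈ N, hv i with hNsdef
      set qNs : ℝ := ∑ i ∈ N, qv i with qNsdef
      have hNs0 : hNs ≤ 0 := by
        apply Finset.sum_nonpos
        intro i hi
        exact le_of_not_gt (Finset.mem_filter.mp hi).2
      have hsplitH : ∑ i ∈ P, hv i + hNs = 1 := by
        rw [hNsdef, hP, hN, Finset.sum_filter_add_sum_filter_not, hsum]
      have hsplitQ : ∑ i ∈ P, qv i + qNs = q := by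
        rw [qNsdef, hP, hN, Finset.sum_filter_add_sum_filter_not, qsum]
      -- Claim A : q * hNs ≤ qNs
      have claimA : q * hNs ≤ qNs := by
        by_contra hlt
        push_neg at hlt
        set c : ℝ := q * hNs - qNs with hc
        have hc0 : 0 < c := by simp only [hc]; linarith
        obtain ⟨r, -, hrlt⟩ := EReal.lt_iff_exists_real_btwn.mp hb
        set u : ℝ := max 0 ((q - r + 1)/c) with hu
        have hu0 : 0 ≤ u := le_max_left _ _
        have huc : q - r + 1 ≤ u * c := by
          have h1 : (q - r + 1)/c ≤ u := le_max_right _ _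
          calc q - r + 1 = ((q - r + 1)/c) * c := by field_simp
            _ ≤ u * c := by nlinarith
        have h1uh : 0 ≤ 1 - u * hNs := by nlinarith
        set Z : Matrix (Fin n) (Fin n) ℝ := (1 - u * hNs) • X + u • Y with hZ
        have hZJ : Z ∈ J :=
          hJadd _ (hJcone _ h1uh X hXJ) _ (hJcone u hu0 Y hYJ)
        have hZH : (H * Z).trace = 1 := by
          rw [hZ, Matrix.mul_add, Matrix.trace_add, Matrix.mul_smul, Matrix.mul_smul,
            Matrix.trace_smul, Matrix.trace_smul, smul_eq_mul, smul_eq_mul, hXH, hYH]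
          ring
        have hZQ : (Q * Z).trace = q - u * c := by
          rw [hZ, Matrix.mul_add, Matrix.trace_add, Matrix.mul_smul, Matrix.mul_smul,
            Matrix.trace_smul, Matrix.trace_smul, smul_eq_mul, smul_eq_mul, ← hq, hYQ, hc]
          ring
        have hle : sInf ((fun X => (((Q * X).trace : ℝ) : EReal)) ''
            {X | X ∈ J ∧ (H * X).trace = 1}) ≤ (((Q * Z).trace : ℝ) : EReal) :=
          sInf_le ⟨Z, ⟨hZJ, hZH⟩, rfl⟩
        have hlt2 : (((Q * Z).trace : ℝ) : EReal) < (r : EReal) := by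
          rw [EReal.coe_lt_coe_iff, hZQ]
          linarith
        exact absurd (hle.trans_lt hlt2) (not_lt.mpr hrlt.le)
      -- find a good rank-one index
      have hsP : 1 ≤ ∑ i ∈ P, hv i := by linarith
      have hPq : ∑ i ∈ P, qv i ≤ q * ∑ i ∈ P, hv i := by
        have hsPe : ∑ i ∈ P, hv i = 1 - hNs := by linarith
        rw [hsPe]
        have : q * (1 - hNs) = q - q * hNs := by ring
        rw [this]
        linarith
      have hPne : P.Nonempty := by
        rcases Finset.eq_empty_or_nonempty P with h | h
        · rw [h, Finset.sum_empty] at hsP; linarith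
        · exact h
      obtain ⟨i, hiP, hile⟩ : ∃ i ∈ P, qv i ≤ q * hv i := by
        by_contra h
        push_neg at h
        have hstrict : ∑ i ∈ P, q * hv i < ∑ i ∈ P, qv i :=
          Finset.sum_lt_sum_of_nonempty hPne h
        rw [← Finset.mul_sum] at hstrict
        linarith
      -- build the rank-one feasible point
      have hit : i ∈ t := (Finset.mem_filter.mp hiP).1
      have hvi0 : 0 < hv i := (Finset.mem_filter.mp hiP).2
      obtain ⟨x, hx⟩ := (hz i hit).1
      set a : ℝ := w i / hv i with ha
      have ha0 : 0 ≤ a := div_nonneg (hw0 i hit) hvi0.le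
      set Z : Matrix (Fin n) (Fin n) ℝ := a • z i with hZ
      have hZJ : Z ∈ J := hJcone a ha0 _ (hz i hit).2
      have hZr1 : ∃ y : Fin n → ℝ, Z = vecMulVec y y := by
        refine ⟨Real.sqrt a • x, ?_⟩
        rw [hZ, hx, smul_vecMulVec_self a ha0]
      have hZH : (H * Z).trace = 1 := by
        rw [hZ, Matrix.mul_smul, Matrix.trace_smul, smul_eq_mul, ha]
        rw [div_mul_eq_mul_div, div_eq_one_iff_eq (ne_of_gt hvi0), hhv]
      have hZQ : (Q * Z).trace ≤ q := by
        rw [hZ, Matrix.mul_smul, Matrix.trace_smul, smul_eq_mul, ha, div_mul_eq_mul_div,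
          div_le_iff₀ hvi0]
        calc w i * (Q * z i).trace = qv i := rfl
          _ ≤ q * hv i := hile
      have hle : sInf ((fun X => (((Q * X).trace : ℝ) : EReal)) ''
          {X | (∃ x : Fin n → ℝ, X = vecMulVec x x) ∧ X ∈ J ∧ (H * X).trace = 1}) ≤
          (((Q * Z).trace : ℝ) : EReal) :=
        sInf_le ⟨Z, ⟨hZr1, hZJ, hZH⟩, rfl⟩
      refine hle.trans ?_
      show (((Q * Z).trace : ℝ) : EReal) ≤ ((q : ℝ) : EReal)
      exact_mod_cast hZQ
  · rintro ⟨hb, -⟩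
    exact hb
end
end

section
/- Let J ⊆ S^n_+ be a closed convex cone that is ROG, and let F be a face of J. Then F is ROG, i.e., F equals the convex hull of Γ^n ∩ F. -/
/-!
A face `F` of a cone `J` is an extreme subset of `J`: if `a • X + b • Y ∈ F` with `a, b > 0`, then
`a • X ∈ F`, hence `X ∈ F`. An extreme convex subset of the convex hull of a set `S` is the convex
hull of the points of `S` it contains; take `S` to be the rank-one matrices of `J`.
-/

open Matrix

section

variable {𝕜 E : Type*} [Field 𝕜] [LinearOrder 𝕜] [IsStrictOrderedRing 𝕜]
  [AddCommGroup E] [Module 𝕜 E]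

theorem IsExtreme.convexHull_inter_eq {s B : Set E} (h : IsExtreme 𝕜 (convexHull 𝕜 s) B)
    (hB : Convex 𝕜 B) : convexHull 𝕜 (s ∩ B) = B := by
  refine (convexHull_min Set.inter_subset_right hB).antisymm fun z hz => ?_
  -- By extremality of `B`, this set is convex; it contains `s`, hence all of `convexHull s`.
  let T := convexHull 𝕜 s ∩ {x | x ∈ B → x ∈ convexHull 𝕜 (s ∩ B)}
  have hsT : s ⊆ T := fun x hx =>
    ⟨subset_convexHull 𝕜 s hx, fun hxB => subset_convexHull 𝕜 _ ⟨hx, hxB⟩⟩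
  have hT : Convex 𝕜 T := by
    refine convex_iff_openSegment_subset.2 fun x hx y hy w hw => ⟨?_, fun hwB => ?_⟩
    · exact (convex_convexHull 𝕜 s).openSegment_subset hx.1 hy.1 hw
    · exact (convex_convexHull 𝕜 _).openSegment_subset
        (hx.2 (h.left_mem_of_mem_openSegment hx.1 hy.1 hwB hw))
        (hy.2 (h.right_mem_of_mem_openSegment hx.1 hy.1 hwB hw)) hw
  exact (convexHull_min hsT hT (h.subset hz)).2 hz

theorem isExtreme_of_cone_face {C F : Set E} (hFC : F ⊆ C)
    (hC : ∀ c : 𝕜, 0 < c → ∀ x ∈ C, c • x ∈ C) (hF : ∀ c : 𝕜, 0 < c → ∀ x ∈ F, c • x ∈ F)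
    (hface : ∀ x ∈ C, ∀ y ∈ C, x + y ∈ F → x ∈ F) : IsExtreme 𝕜 C F := by
  refine ⟨hFC, ?_⟩
  rintro x hx y hy _ hz ⟨a, b, ha, hb, -, rfl⟩
  have hax : a • x ∈ F := hface _ (hC a ha x hx) _ (hC b hb y hy) hz
  simpa [smul_smul, inv_mul_cancel₀ ha.ne'] using hF a⁻¹ (inv_pos.2 ha) _ hax

end

theorem stmt_5_general (n : ℕ) (J F : Set (Matrix (Fin n) (Fin n) ℝ))
    (hJcone : ∀ (c : ℝ), 0 ≤ c → ∀ X ∈ J, c • X ∈ J)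
    (hROG : J = convexHull ℝ ({X | ∃ x : Fin n → ℝ, X = vecMulVec x x} ∩ J))
    (hFsub : F ⊆ J) (hFconv : Convex ℝ F)
    (hFcone : ∀ (c : ℝ), 0 ≤ c → ∀ X ∈ F, c • X ∈ F)
    (hFface : ∀ X ∈ J, ∀ Y ∈ J, X + Y ∈ F → X ∈ F ∧ Y ∈ F) :
    F = convexHull ℝ ({X | ∃ x : Fin n → ℝ, X = vecMulVec x x} ∩ F) := by
  have hext : IsExtreme ℝ J F :=
    isExtreme_of_cone_face hFsub (fun c hc => hJcone c hc.le) (fun c hc => hFcone c hc.le)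
      fun X hX Y hY hXY => (hFface X hX Y hY hXY).1
  rw [hROG] at hext
  have hhull := hext.convexHull_inter_eq hFconv
  rwa [Set.inter_assoc, Set.inter_eq_right.2 hFsub, eq_comm] at hhull

/-- Lemma 4.1 (ii): every face of a ROG cone is ROG. -/
theorem stmt_5 (n : ℕ) (J F : Set (Matrix (Fin n) (Fin n) ℝ))
    (hJpsd : ∀ X ∈ J, X.PosSemidef) (hJclosed : IsClosed J) (hJconv : Convex ℝ J)
    (hJcone : ∀ (c : ℝ), 0 ≤ c → ∀ X ∈ J, c • X ∈ J)
    (hROG : J = convexHull ℝ ({X | ∃ x : Fin n → ℝ, X = vecMulVec x x} ∩ J))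
    (hFsub : F ⊆ J) (hFconv : Convex ℝ F)
    (hFcone : ∀ (c : ℝ), 0 ≤ c → ∀ X ∈ F, c • X ∈ F)
    (hFface : ∀ X ∈ J, ∀ Y ∈ J, X + Y ∈ F → X ∈ F ∧ Y ∈ F) :
    F = convexHull ℝ ({X | ∃ x : Fin n → ℝ, X = vecMulVec x x} ∩ F) :=
  stmt_5_general n J F hJcone hROG hFsub hFconv hFcone hFface
end

section
/- Let a ∈ ℝ^n, let D ⊆ ℝ^n be any set, and let 𝒜 = {a·dᵀ + d·aᵀ : d ∈ D} ⊆ S^n. Then J_+(𝒜) is ROG, i.e., J_+(𝒜) equals the convex hull of Γ^n ∩ J_+(𝒜). -/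
/-! The rank-two matrices `a dᵀ + d aᵀ` only see `X` through the vector `X a`. Split off from a
PSD matrix `X` the rank-one piece `(aᵀ X a)⁻¹ (X a)(X a)ᵀ`; by Cauchy–Schwarz the remainder is PSD
and annihilates `a`, so it is a sum of `w wᵀ` with `w ⊥ a`, on which every `a dᵀ + d aᵀ` vanishes.
The split-off piece pairs with `a dᵀ + d aᵀ` exactly as `X` does, so all pieces stay in `J_+(𝒜)`,
and `X`, a sum of rank-one elements of the cone `J_+(𝒜)`, lies in the convex hull of them. -/

open Matrix

noncomputable section

/-- `J_+(𝒜)` : the PSD matrices `X` with `⟨A,X⟩ ≥ 0` for all `A ∈ 𝒜`. -/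
def Jplus {n : ℕ} (𝒜 : Set (Matrix (Fin n) (Fin n) ℝ)) : Set (Matrix (Fin n) (Fin n) ℝ) :=
  {X | X.PosSemidef ∧ ∀ A ∈ 𝒜, 0 ≤ (A * X).trace}

theorem Matrix.PosSemidef.isSymm {ι : Type*} {X : Matrix ι ι ℝ} (hX : X.PosSemidef) : X.IsSymm :=
  hX.isHermitian

theorem Matrix.vecMulVec_sqrt_smul_self {ι : Type*} (x : ι → ℝ) {c : ℝ} (hc : 0 ≤ c) :
    vecMulVec (√c • x) (√c • x) = c • vecMulVec x x := by
  rw [smul_vecMulVec, vecMulVec_smul, smul_smul, Real.mul_self_sqrt hc]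

section PosSemidef
variable {ι : Type*} [Fintype ι]

theorem Matrix.PosSemidef.dotProduct_mulVec_self_nonneg {X : Matrix ι ι ℝ} (hX : X.PosSemidef)
    (x : ι → ℝ) : 0 ≤ x ⬝ᵥ (X *ᵥ x) := by
  simpa using hX.dotProduct_mulVec_nonneg x

theorem Matrix.posSemidef_vecMulVec_self (x : ι → ℝ) : (vecMulVec x x).PosSemidef := by
  simpa using posSemidef_vecMulVec_self_star x

theorem Matrix.trace_vecMulVec_mul {R : Type*} [CommSemiring R] (u v : ι → R)
    (X : Matrix ι ι R) : (vecMulVec u v * X).trace = v ⬝ᵥ (X *ᵥ u) := by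
  rw [vecMulVec_mul, trace_vecMulVec, dotProduct_comm, ← dotProduct_mulVec]

theorem Matrix.IsSymm.dotProduct_mulVec_comm {R : Type*} [CommSemiring R] {X : Matrix ι ι R}
    (hX : X.IsSymm) (u v : ι → R) : u ⬝ᵥ (X *ᵥ v) = v ⬝ᵥ (X *ᵥ u) := by
  rw [dotProduct_mulVec, ← mulVec_transpose, hX.eq, dotProduct_comm]

theorem Matrix.PosSemidef.sq_dotProduct_mulVec_le {X : Matrix ι ι ℝ} (hX : X.PosSemidef)
    (u v : ι → ℝ) : (u ⬝ᵥ (X *ᵥ v)) ^ 2 ≤ (u ⬝ᵥ (X *ᵥ u)) * (v ⬝ᵥ (X *ᵥ v)) := by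
  have hdisc := discrim_le_zero (K := ℝ) (a := v ⬝ᵥ (X *ᵥ v)) (b := 2 * (u ⬝ᵥ (X *ᵥ v)))
    (c := u ⬝ᵥ (X *ᵥ u)) fun t => by
      have := hX.dotProduct_mulVec_self_nonneg (u + t • v)
      simp only [mulVec_add, mulVec_smul, dotProduct_add, add_dotProduct,
        dotProduct_smul, smul_dotProduct, smul_eq_mul, hX.isSymm.dotProduct_mulVec_comm v u] at this
      linarith
  rw [discrim] at hdisc
  nlinarith

/-- If `aᵀ X a = 0` the coefficient is the junk value `0⁻¹ = 0`, which is still right: then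
`X a = 0` by Cauchy–Schwarz. -/
theorem Matrix.PosSemidef.sub_inv_smul_vecMulVec {X : Matrix ι ι ℝ} (hX : X.PosSemidef)
    (a : ι → ℝ) :
    (X - (a ⬝ᵥ (X *ᵥ a))⁻¹ • vecMulVec (X *ᵥ a) (X *ᵥ a)).PosSemidef := by
  refine .of_dotProduct_mulVec_nonneg ?_ fun x => ?_
  · exact hX.isHermitian.sub ((posSemidef_vecMulVec_self _).isHermitian.smul (.all _))
  · have hcs := hX.sq_dotProduct_mulVec_le x a
    have hxx := hX.dotProduct_mulVec_self_nonneg x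
    rw [star_trivial, sub_mulVec, smul_mulVec, vecMulVec_mulVec, dotProduct_sub, dotProduct_smul,
      dotProduct_smul, op_smul_eq_smul, dotProduct_comm (X *ᵥ a) x, smul_eq_mul, smul_eq_mul]
    rcases (hX.dotProduct_mulVec_self_nonneg a).eq_or_lt with hα | hα
    · simpa [← hα] using hxx
    · rw [sub_nonneg, inv_mul_le_iff₀ hα]
      nlinarith

theorem Matrix.PosSemidef.exists_eq_inv_smul_vecMulVec_add_sum {X : Matrix ι ι ℝ}
    (hX : X.PosSemidef) (a : ι → ℝ) :
    ∃ (m : ℕ) (w : Fin m → ι → ℝ), (∀ i, w i ⬝ᵥ a = 0) ∧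
      X = (a ⬝ᵥ (X *ᵥ a))⁻¹ • vecMulVec (X *ᵥ a) (X *ᵥ a) + ∑ i, vecMulVec (w i) (w i) := by
  obtain ⟨m, w, hw⟩ := posSemidef_iff_eq_sum_vecMulVec.mp (hX.sub_inv_smul_vecMulVec a)
  simp only [star_trivial] at hw
  refine ⟨m, w, fun i => ?_, by rw [← hw, add_sub_cancel]⟩
  have hzero : ∑ i, (w i ⬝ᵥ a) ^ 2 = 0 := by
    have := congrArg (fun M => a ⬝ᵥ (M *ᵥ a)) hw
    simp only [sub_mulVec, smul_mulVec, vecMulVec_mulVec, op_smul_eq_smul, dotProduct_sub,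
      dotProduct_smul, smul_eq_mul, sum_mulVec, dotProduct_sum, dotProduct_comm (X *ᵥ a) a,
      dotProduct_comm a (w _), ← mul_assoc, inv_mul_mul_self, sub_self] at this
    simpa only [sq] using this.symm
  exact pow_eq_zero_iff two_ne_zero |>.mp <|
    congrFun ((Fintype.sum_eq_zero_iff_of_nonneg fun _ => sq_nonneg _).mp hzero) i

end PosSemidef

theorem add_mem_convexHull_of_smul_mem {E : Type*} [AddCommGroup E] [Module ℝ E] {s : Set E}
    (hs : ∀ x ∈ s, ∀ c : ℝ, 0 ≤ c → c • x ∈ s) {x y : E} (hx : x ∈ convexHull ℝ s)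
    (hy : y ∈ convexHull ℝ s) : x + y ∈ convexHull ℝ s := by
  have hdouble : ∀ z ∈ convexHull ℝ s, (2 : ℝ) • z ∈ convexHull ℝ s := fun z hz =>
    convexHull_mono (Set.smul_set_subset_iff.mpr fun w hw => hs w hw 2 zero_le_two)
      (convexHull_smul (2 : ℝ) s ▸ Set.smul_mem_smul_set hz)
  have := convex_convexHull ℝ s (hdouble x hx) (hdouble y hy) (a := 1 / 2) (b := 1 / 2)
    (by norm_num) (by norm_num) (by norm_num)
  rwa [smul_smul, smul_smul, show (1 / 2 : ℝ) * 2 = 1 by norm_num, one_smul, one_smul] at this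

theorem sum_mem_convexHull_of_smul_mem {E : Type*} [AddCommGroup E] [Module ℝ E] {s : Set E}
    (hs : ∀ x ∈ s, ∀ c : ℝ, 0 ≤ c → c • x ∈ s) (hne : s.Nonempty) {ι : Type*} (t : Finset ι)
    {f : ι → E} (hf : ∀ i ∈ t, f i ∈ convexHull ℝ s) : ∑ i ∈ t, f i ∈ convexHull ℝ s := by
  obtain ⟨x, hx⟩ := hne
  exact Finset.sum_induction _ (· ∈ convexHull ℝ s) (fun _ _ => add_mem_convexHull_of_smul_mem hs)
    (subset_convexHull ℝ s (zero_smul ℝ x ▸ hs x hx 0 le_rfl)) hf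

section Jplus
variable {n : ℕ}

theorem convex_Jplus (𝒜 : Set (Matrix (Fin n) (Fin n) ℝ)) : Convex ℝ (Jplus 𝒜) := by
  intro X hX Y hY s t hs ht _
  refine ⟨(hX.1.smul hs).add (hY.1.smul ht), fun A hA => ?_⟩
  rw [Matrix.mul_add, trace_add, Matrix.mul_smul, Matrix.mul_smul, trace_smul, trace_smul]
  exact add_nonneg (smul_nonneg hs (hX.2 A hA)) (smul_nonneg ht (hY.2 A hA))

theorem smul_mem_Jplus {𝒜 : Set (Matrix (Fin n) (Fin n) ℝ)} {X : Matrix (Fin n) (Fin n) ℝ}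
    (hX : X ∈ Jplus 𝒜) {c : ℝ} (hc : 0 ≤ c) : c • X ∈ Jplus 𝒜 := by
  refine ⟨hX.1.smul hc, fun A hA => ?_⟩
  rw [Matrix.mul_smul, trace_smul]
  exact smul_nonneg hc (hX.2 A hA)

theorem mem_Jplus_symmRankTwo_iff {a : Fin n → ℝ} {D : Set (Fin n → ℝ)}
    {X : Matrix (Fin n) (Fin n) ℝ} :
    X ∈ Jplus {M | ∃ d ∈ D, M = vecMulVec a d + vecMulVec d a} ↔
      X.PosSemidef ∧ ∀ d ∈ D, 0 ≤ d ⬝ᵥ (X *ᵥ a) := by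
  refine and_congr_right fun hX => ?_
  have htrace : ∀ d, ((vecMulVec a d + vecMulVec d a) * X).trace = 2 * (d ⬝ᵥ (X *ᵥ a)) := by
    intro d
    rw [Matrix.add_mul, trace_add, trace_vecMulVec_mul, trace_vecMulVec_mul,
      hX.isSymm.dotProduct_mulVec_comm a d]
    ring
  constructor
  · intro h d hd
    linarith [htrace d ▸ h _ ⟨d, hd, rfl⟩]
  · rintro h _ ⟨d, hd, rfl⟩
    linarith [htrace d, h d hd]

theorem vecMulVec_self_mem_Jplus_symmRankTwo_iff {a : Fin n → ℝ} {D : Set (Fin n → ℝ)}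
    {x : Fin n → ℝ} :
    vecMulVec x x ∈ Jplus {M | ∃ d ∈ D, M = vecMulVec a d + vecMulVec d a} ↔
      ∀ d ∈ D, 0 ≤ (x ⬝ᵥ a) * (d ⬝ᵥ x) := by
  simp [mem_Jplus_symmRankTwo_iff, vecMulVec_mulVec, op_smul_eq_smul, posSemidef_vecMulVec_self x]

end Jplus

/-- Theorem 4.2, [ARGUE2023, Theorem 1]: for a family of rank-two
matrices `a·dᵀ + d·aᵀ` (`d ∈ D`), the cone `J_+(𝒜)` is ROG. -/
theorem stmt_7 (n : ℕ) (a : Fin n → ℝ) (D : Set (Fin n → ℝ))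
    (𝒜 : Set (Matrix (Fin n) (Fin n) ℝ))
    (h𝒜 : 𝒜 = {M | ∃ d ∈ D, M = vecMulVec a d + vecMulVec d a}) :
    Jplus 𝒜 = convexHull ℝ ({X | ∃ x : Fin n → ℝ, X = vecMulVec x x} ∩ Jplus 𝒜) := by
  subst h𝒜
  refine (convexHull_min Set.inter_subset_right (convex_Jplus _)).antisymm' fun X hX => ?_
  set R := {X | ∃ x : Fin n → ℝ, X = vecMulVec x x} ∩
    Jplus {M | ∃ d ∈ D, M = vecMulVec a d + vecMulVec d a}
  have hR : ∀ Y ∈ R, ∀ c : ℝ, 0 ≤ c → c • Y ∈ R := by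
    rintro _ ⟨⟨x, rfl⟩, hx⟩ c hc
    exact ⟨⟨√c • x, (vecMulVec_sqrt_smul_self x hc).symm⟩, smul_mem_Jplus hx hc⟩
  obtain ⟨hXpsd, hXD⟩ := mem_Jplus_symmRankTwo_iff.mp hX
  obtain ⟨m, w, hwa, hXeq⟩ := hXpsd.exists_eq_inv_smul_vecMulVec_add_sum a
  have hα := hXpsd.dotProduct_mulVec_self_nonneg a
  have hXa : vecMulVec (X *ᵥ a) (X *ᵥ a) ∈ R :=
    ⟨⟨_, rfl⟩, vecMulVec_self_mem_Jplus_symmRankTwo_iff.mpr fun d hd =>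
      mul_nonneg (by rwa [dotProduct_comm]) (hXD d hd)⟩
  have hw : ∀ i, vecMulVec (w i) (w i) ∈ R := fun i =>
    ⟨⟨_, rfl⟩, vecMulVec_self_mem_Jplus_symmRankTwo_iff.mpr fun d _ => by simp [hwa i]⟩
  have hsum : ∑ i, vecMulVec (w i) (w i) ∈ convexHull ℝ R :=
    sum_mem_convexHull_of_smul_mem hR ⟨_, hXa⟩ _ fun i _ => subset_convexHull ℝ R (hw i)
  rw [hXeq]
  exact add_mem_convexHull_of_smul_mem hR
    (subset_convexHull ℝ R (hR _ hXa _ (inv_nonneg.mpr hα))) hsum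
end
end

section
/- Let n ≥ 1, let 𝒜 = {A^1, …, A^ℓ} ⊆ S^n, let Q ∈ S^n, and let H¹ = diag(0,…,0,1) ∈ S^n. Assume that Q_{ij} ≤ 0 for all distinct i, j ∈ {1,…,n} and that (−A^k)_{ij} ≤ 0 for all distinct i, j ∈ {1,…,n} and every k ∈ {1,…,ℓ}. If the problem inf{⟨Q,X⟩ : X ∈ J_+(𝒜), ⟨H¹,X⟩ = 1} has an optimal solution, then it has a rank-1 optimal solution, i.e., there exists x ∈ ℝ^n with x·xᵀ ∈ J_+(𝒜), (x·xᵀ)_{nn} = 1, and ⟨Q, x·xᵀ⟩ ≤ ⟨Q, X⟩ for every X ∈ J_+(𝒜) with X_{nn} = 1. -/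
/-!
Replace an optimal `X` by the rank-one matrix `x xᵀ` with `x i = √(X i i)`. It has the same
diagonal, and by the `2 × 2` minors of `X` it dominates `X` entrywise. Since `Q` and every `-Aᵏ`
are nonpositive off the diagonal, `⟨Q, x xᵀ⟩ ≤ ⟨Q, X⟩` and `⟨Aᵏ, x xᵀ⟩ ≥ ⟨Aᵏ, X⟩ ≥ 0`, so `x xᵀ`
is feasible and again optimal.
-/

open Matrix

namespace Matrix

variable {n : Type*}

theorem trace_mul_le_trace_mul_of_le_of_diag_eq [Fintype n] {R : Type*} [Semiring R]
    [PartialOrder R] [IsOrderedRing R] {M X Y : Matrix n n R} (hM : ∀ i j, i ≠ j → 0 ≤ M i j)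
    (hle : ∀ i j, X i j ≤ Y i j) (hdiag : ∀ i, X i i = Y i i) :
    (M * X).trace ≤ (M * Y).trace := by
  simp only [trace, diag, mul_apply]
  refine Finset.sum_le_sum fun i _ => Finset.sum_le_sum fun j _ => ?_
  rcases eq_or_ne i j with rfl | hij
  · rw [hdiag]
  · exact mul_le_mul_of_nonneg_left (hle j i) (hM i j hij)

namespace PosSemidef

variable {X : Matrix n n ℝ}

theorem apply_sq_le (hX : X.PosSemidef) (i j : n) : X i j ^ 2 ≤ X i i * X j j := by
  have hminor := (hX.submatrix ![i, j]).det_nonneg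
  have hsymm : X j i = X i j := by simpa using hX.isHermitian.apply i j
  simp only [det_fin_two, submatrix_apply, cons_val_zero, cons_val_one] at hminor
  rw [hsymm, ← sq] at hminor
  linarith

theorem apply_le_sqrt_mul_sqrt (hX : X.PosSemidef) (i j : n) :
    X i j ≤ √(X i i) * √(X j j) := by
  rw [← Real.sqrt_mul hX.diag_nonneg]
  exact (le_abs_self _).trans (Real.abs_le_sqrt (hX.apply_sq_le i j))

end PosSemidef

noncomputable def sqrtDiag (X : Matrix n n ℝ) : n → ℝ := fun i => √(X i i)

theorem posSemidef_vecMulVec_self_s8 [Finite n] (x : n → ℝ) : (vecMulVec x x).PosSemidef := by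
  simpa using posSemidef_vecMulVec_self_star x

theorem PosSemidef.vecMulVec_sqrtDiag_apply_self {X : Matrix n n ℝ} (hX : X.PosSemidef) (i : n) :
    vecMulVec (sqrtDiag X) (sqrtDiag X) i i = X i i :=
  Real.mul_self_sqrt hX.diag_nonneg

theorem PosSemidef.le_vecMulVec_sqrtDiag {X : Matrix n n ℝ} (hX : X.PosSemidef) (i j : n) :
    X i j ≤ vecMulVec (sqrtDiag X) (sqrtDiag X) i j :=
  hX.apply_le_sqrt_mul_sqrt i j

end Matrix

/-- Matrices have size `n = m+1`, and the last coordinate plays the role of the index `n`. -/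
theorem stmt_8_general (m ℓ : ℕ) (A : Fin ℓ → Matrix (Fin (m+1)) (Fin (m+1)) ℝ)
    (Q : Matrix (Fin (m+1)) (Fin (m+1)) ℝ)
    (hQsign : ∀ i j, i ≠ j → Q i j ≤ 0)
    (hAsign : ∀ k, ∀ i j, i ≠ j → (-(A k)) i j ≤ 0)
    (H1 : Matrix (Fin (m+1)) (Fin (m+1)) ℝ)
    (hH1 : H1 = Matrix.diagonal (fun i => if i = Fin.last m then (1 : ℝ) else 0))
    -- the problem inf{⟨Q,X⟩ : X ∈ J_+(𝒜), ⟨H¹,X⟩ = 1} has an optimal solution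
    (hopt : ∃ Xs : Matrix (Fin (m+1)) (Fin (m+1)) ℝ,
      (Xs.PosSemidef ∧ (∀ k, 0 ≤ (A k * Xs).trace) ∧ (H1 * Xs).trace = 1) ∧
      ∀ X : Matrix (Fin (m+1)) (Fin (m+1)) ℝ, X.PosSemidef →
        (∀ k, 0 ≤ (A k * X).trace) → (H1 * X).trace = 1 →
        (Q * Xs).trace ≤ (Q * X).trace) :
    -- it has a rank-1 optimal solution
    ∃ x : Fin (m+1) → ℝ,
      (vecMulVec x x).PosSemidef ∧ (∀ k, 0 ≤ (A k * vecMulVec x x).trace) ∧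
      (vecMulVec x x) (Fin.last m) (Fin.last m) = 1 ∧
      ∀ X : Matrix (Fin (m+1)) (Fin (m+1)) ℝ, X.PosSemidef →
        (∀ k, 0 ≤ (A k * X).trace) → X (Fin.last m) (Fin.last m) = 1 →
        (Q * vecMulVec x x).trace ≤ (Q * X).trace := by
  obtain ⟨Xs, ⟨hXs, hXsA, hXsH⟩, hXsmin⟩ := hopt
  have htrace_H1 (X : Matrix (Fin (m+1)) (Fin (m+1)) ℝ) :
      (H1 * X).trace = X (Fin.last m) (Fin.last m) := by
    simp [hH1, trace, diagonal_mul, ite_mul]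
  have hmono {M : Matrix (Fin (m+1)) (Fin (m+1)) ℝ} (hM : ∀ i j, i ≠ j → 0 ≤ M i j) :
      (M * Xs).trace ≤ (M * vecMulVec (sqrtDiag Xs) (sqrtDiag Xs)).trace :=
    trace_mul_le_trace_mul_of_le_of_diag_eq hM hXs.le_vecMulVec_sqrtDiag
      fun i => (hXs.vecMulVec_sqrtDiag_apply_self i).symm
  have hQ : (Q * vecMulVec (sqrtDiag Xs) (sqrtDiag Xs)).trace ≤ (Q * Xs).trace := by
    simpa using hmono (M := -Q) fun i j hij => neg_nonneg.mpr (hQsign i j hij)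
  refine ⟨sqrtDiag Xs, posSemidef_vecMulVec_self_s8 _, fun k => ?_, ?_, fun X hX hXA hXH => ?_⟩
  · exact (hXsA k).trans (hmono fun i j hij => neg_nonpos.mp (hAsign k i j hij))
  · rw [hXs.vecMulVec_sqrtDiag_apply_self, ← htrace_H1 Xs, hXsH]
  · exact hQ.trans (hXsmin X hX hXA (by rw [htrace_H1, hXH]))

/-- Lemma 4.2, sign pattern condition.  Matrices have size
`n = m+1` (so `n ≥ 1`); the last coordinate plays the role of the index `n`, and
`H¹ = diag(0,…,0,1)`. -/
theorem stmt_8 (m ℓ : ℕ) (A : Fin ℓ → Matrix (Fin (m+1)) (Fin (m+1)) ℝ)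
    (Q : Matrix (Fin (m+1)) (Fin (m+1)) ℝ)
    (hQsym : Q.IsSymm) (hAsym : ∀ k, (A k).IsSymm)
    (hQsign : ∀ i j, i ≠ j → Q i j ≤ 0)
    (hAsign : ∀ k, ∀ i j, i ≠ j → (-(A k)) i j ≤ 0)
    (H1 : Matrix (Fin (m+1)) (Fin (m+1)) ℝ)
    (hH1 : H1 = Matrix.diagonal (fun i => if i = Fin.last m then (1 : ℝ) else 0))
    -- the problem inf{⟨Q,X⟩ : X ∈ J_+(𝒜), ⟨H¹,X⟩ = 1} has an optimal solution
    (hopt : ∃ Xs : Matrix (Fin (m+1)) (Fin (m+1)) ℝ,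
      (Xs.PosSemidef ∧ (∀ k, 0 ≤ (A k * Xs).trace) ∧ (H1 * Xs).trace = 1) ∧
      ∀ X : Matrix (Fin (m+1)) (Fin (m+1)) ℝ, X.PosSemidef →
        (∀ k, 0 ≤ (A k * X).trace) → (H1 * X).trace = 1 →
        (Q * Xs).trace ≤ (Q * X).trace) :
    -- it has a rank-1 optimal solution
    ∃ x : Fin (m+1) → ℝ,
      (vecMulVec x x).PosSemidef ∧ (∀ k, 0 ≤ (A k * vecMulVec x x).trace) ∧
      (vecMulVec x x) (Fin.last m) (Fin.last m) = 1 ∧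
      ∀ X : Matrix (Fin (m+1)) (Fin (m+1)) ℝ, X.PosSemidef →
        (∀ k, 0 ≤ (A k * X).trace) → X (Fin.last m) (Fin.last m) = 1 →
        (Q * vecMulVec x x).trace ≤ (Q * X).trace :=
  stmt_8_general m ℓ A Q hQsign hAsign H1 hH1 hopt
end

section
/- Let B ∈ S^n. Then J_0(B) ⊆ CP^n if and only if every x ∈ ℝ^n with xᵀ·B·x = 0 satisfies x ∈ ℝ^n_+ ∪ (−ℝ^n_+); moreover, either condition implies J_0(B) ⊆ DN^n. -/
open Matrix

noncomputable section

/-- The completely positive cone `CP^n`. -/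
def CP (n : ℕ) : Set (Matrix (Fin n) (Fin n) ℝ) :=
  convexHull ℝ {X | ∃ x : Fin n → ℝ, 0 ≤ x ∧ X = vecMulVec x x}

/-- The doubly nonnegative cone `DN^n = S^n_+ ∩ N^n`. -/
def DN (n : ℕ) : Set (Matrix (Fin n) (Fin n) ℝ) :=
  {X | X.PosSemidef ∧ ∀ i j, 0 ≤ X i j}

/-!
If `xᵀ B x = 0` then `x xᵀ ∈ J₀(B)`; membership in `CP ⊆ DN` makes all products `xᵢ xⱼ`
nonnegative, so `x` has constant sign. Conversely, write `X ∈ J₀(B)` as `∑ vᵢ vᵢᵀ`, so that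
`∑ vᵢᵀ B vᵢ = ⟨B, X⟩ = 0`. Unless some `vᵢ` is already `B`-isotropic, there are a `v` with
`vᵀ B v > 0` and a `w` with `wᵀ B w < 0`; a rotation of the pair preserves `v vᵀ + w wᵀ`, and by
the intermediate value theorem some rotation makes one of the two isotropic. Repeating, `X`
becomes a sum of `v vᵀ` with `vᵀ B v = 0`, each of which is completely positive by hypothesis.
-/

open scoped Pointwise

namespace Matrix

variable {ι R : Type*}

theorem vecMulVec_neg_self [Ring R] (v : ι → R) : vecMulVec (-v) (-v) = vecMulVec v v := by
  rw [neg_vecMulVec, vecMulVec_neg, neg_neg]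

theorem vecMulVec_add_vecMulVec_rotate [CommRing R] (v w : ι → R) {c s : R}
    (hcs : c ^ 2 + s ^ 2 = 1) :
    vecMulVec (c • v + s • w) (c • v + s • w) + vecMulVec ((-s) • v + c • w) ((-s) • v + c • w) =
      vecMulVec v v + vecMulVec w w := by
  ext i j
  simp only [add_apply, vecMulVec_apply, Pi.add_apply, Pi.smul_apply, smul_eq_mul]
  linear_combination (v i * v j + w i * w j) * hcs

variable [Fintype ι]

theorem trace_mul_vecMulVec [CommSemiring R] (B : Matrix ι ι R) (x y : ι → R) :
    (B * vecMulVec x y).trace = y ⬝ᵥ B *ᵥ x := by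
  rw [mul_vecMulVec, trace_vecMulVec, dotProduct_comm]

theorem exists_rotate_isotropic (B : Matrix ι ι ℝ) {v w : ι → ℝ}
    (hv : 0 < v ⬝ᵥ B *ᵥ v) (hw : w ⬝ᵥ B *ᵥ w < 0) :
    ∃ c s : ℝ, c ^ 2 + s ^ 2 = 1 ∧ (c • v + s • w) ⬝ᵥ B *ᵥ (c • v + s • w) = 0 := by
  let f : ℝ → ℝ := fun θ =>
    (Real.cos θ • v + Real.sin θ • w) ⬝ᵥ B *ᵥ (Real.cos θ • v + Real.sin θ • w)
  have hf : Continuous f := by fun_prop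
  have hf0 : f 0 = v ⬝ᵥ B *ᵥ v := by simp [f]
  have hfpi : f (Real.pi / 2) = w ⬝ᵥ B *ᵥ w := by simp [f]
  obtain ⟨θ, -, hθ⟩ := intermediate_value_Icc' (by positivity) hf.continuousOn
    (show (0 : ℝ) ∈ Set.Icc (f (Real.pi / 2)) (f 0) by constructor <;> linarith)
  exact ⟨Real.cos θ, Real.sin θ, Real.cos_sq_add_sin_sq θ, hθ⟩

end Matrix

theorem Multiset.exists_pos_and_exists_neg_of_sum_eq_zero {α : Type*} [AddCommGroup α]
    [LinearOrder α] [IsOrderedAddMonoid α] {s : Multiset α} (hs : s.sum = 0) {x : α}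
    (hx : x ∈ s) (hx0 : x ≠ 0) : (∃ y ∈ s, 0 < y) ∧ ∃ y ∈ s, y < 0 := by
  constructor
  · by_contra! h
    have hneg : (s.map Neg.neg).sum = 0 := by
      rw [Multiset.sum_map_neg, Multiset.map_id', hs, neg_zero]
    have := Multiset.all_zero_of_le_zero_le_of_sum_eq_zero (s := s.map Neg.neg)
      (by simpa using h) hneg (-x) (Multiset.mem_map_of_mem _ hx)
    exact hx0 (neg_eq_zero.mp this)
  · by_contra! h
    exact hx0 (Multiset.all_zero_of_le_zero_le_of_sum_eq_zero h hs x hx)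

theorem Pi.nonneg_or_nonpos_of_forall_mul_nonneg {ι α : Type*} [Ring α] [LinearOrder α]
    [IsStrictOrderedRing α] {x : ι → α} (h : ∀ i j, 0 ≤ x i * x j) : 0 ≤ x ∨ x ≤ 0 := by
  by_contra! hx
  obtain ⟨hnonneg, hnonpos⟩ := hx
  obtain ⟨i, hi⟩ : ∃ i, x i < 0 := by simpa [Pi.le_def] using hnonneg
  obtain ⟨j, hj⟩ : ∃ j, 0 < x j := by simpa [Pi.le_def] using hnonpos
  exact (h i j).not_gt (mul_neg_of_neg_of_pos hi hj)

section SumVecMulVec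

variable {ι : Type*}

def sumVecMulVec (m : Multiset (ι → ℝ)) : Matrix ι ι ℝ :=
  (m.map fun v => vecMulVec v v).sum

@[simp]
theorem sumVecMulVec_zero : sumVecMulVec (0 : Multiset (ι → ℝ)) = 0 := rfl

@[simp]
theorem sumVecMulVec_cons (v : ι → ℝ) (m : Multiset (ι → ℝ)) :
    sumVecMulVec (v ::ₘ m) = vecMulVec v v + sumVecMulVec m := by
  simp [sumVecMulVec]

variable [Fintype ι]

theorem trace_mul_sumVecMulVec (B : Matrix ι ι ℝ) (m : Multiset (ι → ℝ)) :
    (B * sumVecMulVec m).trace = (m.map fun v => v ⬝ᵥ B *ᵥ v).sum := by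
  induction m using Multiset.induction_on with
  | empty => simp
  | cons v m ih => simp [mul_add, trace_mul_vecMulVec, ih]

theorem Matrix.PosSemidef.exists_eq_sumVecMulVec {X : Matrix ι ι ℝ} (hX : X.PosSemidef) :
    ∃ m : Multiset (ι → ℝ), X = sumVecMulVec m := by
  obtain ⟨k, v, rfl⟩ := posSemidef_iff_eq_sum_vecMulVec.mp hX
  exact ⟨Finset.univ.val.map v,
    by simp [sumVecMulVec, Finset.sum_eq_multiset_sum, Function.comp_def]⟩

theorem exists_isotropic_vecMulVec_add_of_trace_eq_zero (B : Matrix ι ι ℝ)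
    {m : Multiset (ι → ℝ)} (hm0 : m ≠ 0) (hm : (B * sumVecMulVec m).trace = 0) :
    ∃ (v : ι → ℝ) (m' : Multiset (ι → ℝ)), v ⬝ᵥ B *ᵥ v = 0 ∧
      Multiset.card m' < Multiset.card m ∧ sumVecMulVec m = vecMulVec v v + sumVecMulVec m' := by
  by_cases hiso : ∃ v ∈ m, v ⬝ᵥ B *ᵥ v = 0
  · obtain ⟨v, hv, hv0⟩ := hiso
    exact ⟨v, m.erase v, hv0, Multiset.card_erase_lt_of_mem hv,
      by rw [← sumVecMulVec_cons, Multiset.cons_erase hv]⟩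
  push Not at hiso
  obtain ⟨a, ha⟩ := Multiset.exists_mem_of_ne_zero hm0
  rw [trace_mul_sumVecMulVec] at hm
  obtain ⟨⟨_, hqu, hupos⟩, ⟨_, hqw, hwneg⟩⟩ :=
    Multiset.exists_pos_and_exists_neg_of_sum_eq_zero hm (Multiset.mem_map_of_mem _ ha) (hiso a ha)
  obtain ⟨u, hu, rfl⟩ := Multiset.mem_map.mp hqu
  obtain ⟨w, hw, rfl⟩ := Multiset.mem_map.mp hqw
  have hwu : w ∈ m.erase u := (Multiset.mem_erase_of_ne (by rintro rfl; linarith)).mpr hw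
  obtain ⟨c, s, hcs, hrot⟩ := exists_rotate_isotropic B hupos hwneg
  refine ⟨c • u + s • w, ((-s) • u + c • w) ::ₘ (m.erase u).erase w, hrot, ?_, ?_⟩
  · rw [Multiset.card_cons, Multiset.card_erase_add_one hwu]
    exact Multiset.card_erase_lt_of_mem hu
  · conv_lhs => rw [← Multiset.cons_erase hu, ← Multiset.cons_erase hwu]
    simp only [sumVecMulVec_cons]
    rw [← add_assoc, ← add_assoc, vecMulVec_add_vecMulVec_rotate u w hcs]

theorem exists_isotropic_sumVecMulVec_eq (B : Matrix ι ι ℝ) (m : Multiset (ι → ℝ))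
    (hm : (B * sumVecMulVec m).trace = 0) :
    ∃ m' : Multiset (ι → ℝ), sumVecMulVec m' = sumVecMulVec m ∧ ∀ v ∈ m', v ⬝ᵥ B *ᵥ v = 0 := by
  rcases eq_or_ne m 0 with rfl | hm0
  · exact ⟨0, rfl, by simp⟩
  obtain ⟨v, m', hv, hcard, hsum⟩ := exists_isotropic_vecMulVec_add_of_trace_eq_zero B hm0 hm
  have hm' : (B * sumVecMulVec m').trace = 0 := by
    rwa [hsum, mul_add, trace_add, trace_mul_vecMulVec, hv, zero_add] at hm
  obtain ⟨m'', hsum'', hiso''⟩ := exists_isotropic_sumVecMulVec_eq B m' hm'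
  exact ⟨v ::ₘ m'', by rw [sumVecMulVec_cons, hsum'', hsum], by simpa [hv] using hiso''⟩
termination_by Multiset.card m

end SumVecMulVec

theorem convex_DN (n : ℕ) : Convex ℝ (DN n) := by
  intro X hX Y hY a b ha hb _
  refine ⟨(hX.1.smul ha).add (hY.1.smul hb), fun i j => ?_⟩
  simp only [Matrix.add_apply, Matrix.smul_apply, smul_eq_mul]
  exact add_nonneg (mul_nonneg ha (hX.2 i j)) (mul_nonneg hb (hY.2 i j))

namespace CP

variable {n : ℕ}

theorem vecMulVec_mem {v : Fin n → ℝ} (hv : 0 ≤ v ∨ v ≤ 0) : vecMulVec v v ∈ CP n := by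
  refine subset_convexHull ℝ _ ?_
  rcases hv with hv | hv
  · exact ⟨v, hv, rfl⟩
  · exact ⟨-v, neg_nonneg.mpr hv, (vecMulVec_neg_self v).symm⟩

theorem smul_mem {c : ℝ} (hc : 0 ≤ c) {X : Matrix (Fin n) (Fin n) ℝ} (hX : X ∈ CP n) :
    c • X ∈ CP n := by
  have hgen : c • {X : Matrix (Fin n) (Fin n) ℝ | ∃ x, 0 ≤ x ∧ X = vecMulVec x x} ⊆
      {X | ∃ x, 0 ≤ x ∧ X = vecMulVec x x} := by
    rintro _ ⟨_, ⟨x, hx, rfl⟩, rfl⟩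
    refine ⟨√c • x, smul_nonneg (Real.sqrt_nonneg c) hx, ?_⟩
    rw [smul_vecMulVec, vecMulVec_smul, smul_smul, Real.mul_self_sqrt hc]
  unfold CP at hX ⊢
  exact convexHull_mono hgen (by rw [convexHull_smul]; exact Set.smul_mem_smul_set hX)

theorem add_mem {X Y : Matrix (Fin n) (Fin n) ℝ} (hX : X ∈ CP n) (hY : Y ∈ CP n) :
    X + Y ∈ CP n := by
  have hmid : (1 / 2 : ℝ) • X + (1 / 2 : ℝ) • Y ∈ CP n :=
    convex_convexHull ℝ _ hX hY (by norm_num) (by norm_num) (by norm_num)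
  convert smul_mem zero_le_two hmid using 1
  simp only [smul_add, smul_smul]
  norm_num

theorem sumVecMulVec_mem {m : Multiset (Fin n → ℝ)} (hm : ∀ v ∈ m, 0 ≤ v ∨ v ≤ 0) :
    sumVecMulVec m ∈ CP n := by
  induction m using Multiset.induction_on with
  | empty => simpa using vecMulVec_mem (v := 0) (Or.inl le_rfl)
  | cons v m ih =>
    rw [sumVecMulVec_cons]
    exact add_mem (vecMulVec_mem (hm v (Multiset.mem_cons_self v m)))
      (ih fun w hw => hm w (Multiset.mem_cons_of_mem hw))

theorem subset_DN : CP n ⊆ DN n := by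
  refine convexHull_min ?_ (convex_DN n)
  rintro _ ⟨x, hx, rfl⟩
  exact ⟨by simpa using posSemidef_vecMulVec_self_star x, fun i j => mul_nonneg (hx i) (hx j)⟩

end CP

theorem stmt_10_general (n : ℕ) (B : Matrix (Fin n) (Fin n) ℝ) :
    ({X | X.PosSemidef ∧ (B * X).trace = 0} ⊆ CP n ↔
      ∀ x : Fin n → ℝ, dotProduct x (B.mulVec x) = 0 → (0 ≤ x ∨ x ≤ 0)) ∧
    (({X : Matrix (Fin n) (Fin n) ℝ | X.PosSemidef ∧ (B * X).trace = 0} ⊆ CP n) →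
      {X | X.PosSemidef ∧ (B * X).trace = 0} ⊆ DN n) := by
  refine ⟨⟨fun h x hx => ?_, fun h X ⟨hX, hBX⟩ => ?_⟩, fun h => h.trans CP.subset_DN⟩
  · have hxx : vecMulVec x x ∈ DN n := CP.subset_DN <| h
      ⟨by simpa using posSemidef_vecMulVec_self_star x, by rwa [trace_mul_vecMulVec]⟩
    exact Pi.nonneg_or_nonpos_of_forall_mul_nonneg hxx.2
  · obtain ⟨m, rfl⟩ := hX.exists_eq_sumVecMulVec
    obtain ⟨m', hm', hiso⟩ := exists_isotropic_sumVecMulVec_eq B m hBX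
    exact hm' ▸ CP.sumVecMulVec_mem fun v hv => h v (hiso v hv)

/-- part of Lemma 5.2. -/
theorem stmt_10 (n : ℕ) (B : Matrix (Fin n) (Fin n) ℝ) (hBsym : B.IsSymm) :
    ({X | X.PosSemidef ∧ (B * X).trace = 0} ⊆ CP n ↔
      ∀ x : Fin n → ℝ, dotProduct x (B.mulVec x) = 0 → (0 ≤ x ∨ x ≤ 0)) ∧
    (({X : Matrix (Fin n) (Fin n) ℝ | X.PosSemidef ∧ (B * X).trace = 0} ⊆ CP n) →
      {X | X.PosSemidef ∧ (B * X).trace = 0} ⊆ DN n) :=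
  stmt_10_general n B
end
end

section
/- Let n ≥ 2, let 𝒜 ⊆ S^n be finite, and let Q ∈ S^n. Assume that the function u ↦ q(u,Q) is convex on ℝ^{n-1} and that for every A ∈ 𝒜 the function u ↦ q(u,A) is concave on ℝ^{n-1}. If the problem inf{⟨Q,X⟩ : X ∈ S^n_+, ⟨A,X⟩ ≥ 0 for all A ∈ 𝒜, X_{nn} = 1} has an optimal solution, then it has a rank-1 optimal solution, i.e., there exists x ∈ ℝ^n with x·xᵀ positive semidefinite, ⟨A, x·xᵀ⟩ ≥ 0 for all A ∈ 𝒜, (x·xᵀ)_{nn} = 1, and ⟨Q, x·xᵀ⟩ ≤ ⟨Q, X⟩ for every feasible X. -/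
open Matrix

noncomputable section

/-
Let `X` be optimal and `x` its last column, so `x_n = X_nn = 1`. The Schur complement
`N = X - x xᵀ` is positive semidefinite and kills `e_n`, so `N = Cᵀ C` with every row of `C`
in the hyperplane `{w | w_n = 0}`. Convexity of `q(·,B)` says exactly that `wᵀ B w ≥ 0` on that
hyperplane, hence `⟨B, N⟩ = ∑ᵢ cᵢᵀ B cᵢ ≥ 0`. Applied to `Q` and to `-A` for `A ∈ 𝒜`, this shows
that `x xᵀ` is feasible and no worse than `X`.
-/

open Set

namespace Matrix

variable {n : Type*} [Fintype n] [DecidableEq n]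

theorem PosSemidef.sub_vecMulVec_col {X : Matrix n n ℝ} (hX : X.PosSemidef)
    {j : n} (hj : X j j = 1) : (X - vecMulVec (X.col j) (X.col j)).PosSemidef := by
  refine .of_dotProduct_mulVec_nonneg (hX.1.sub (posSemidef_vecMulVec_self_star _).1) fun w => ?_
  set c := X.col j ⬝ᵥ w
  have hXe : w ⬝ᵥ X *ᵥ Pi.single j 1 = c := by
    rw [mulVec_single_one, dotProduct_comm]
  have heX : Pi.single j 1 ⬝ᵥ X *ᵥ w = c := by
    rw [single_one_dotProduct]
    simp only [c, mulVec, dotProduct, col_apply]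
    exact Finset.sum_congr rfl fun i _ => by rw [(isHermitian_iff_isSymm.mp hX.1).apply]
  have heXe : Pi.single j 1 ⬝ᵥ X *ᵥ Pi.single j (1 : ℝ) = 1 := by
    rw [mulVec_single_one, single_one_dotProduct, col_apply, hj]
  have hshift : (w - c • Pi.single j 1) ⬝ᵥ X *ᵥ (w - c • Pi.single j 1)
      = w ⬝ᵥ (X - vecMulVec (X.col j) (X.col j)) *ᵥ w := by
    simp only [mulVec_sub, mulVec_smul, sub_dotProduct, dotProduct_sub, smul_dotProduct,
      dotProduct_smul, sub_mulVec, vecMulVec_mulVec, hXe, heX, heXe, smul_eq_mul]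
    simp [c, dotProduct_comm w]
  simpa only [star_trivial, ← hshift] using hX.dotProduct_mulVec_nonneg (w - c • Pi.single j 1)

theorem trace_mul_nonneg_of_mulVec_eq_zero {N Q : Matrix n n ℝ} {e : n → ℝ}
    (hN : N.PosSemidef) (he : N *ᵥ e = 0) (hQ : ∀ w, w ⬝ᵥ e = 0 → 0 ≤ w ⬝ᵥ Q *ᵥ w) :
    0 ≤ (Q * N).trace := by
  obtain ⟨C, rfl⟩ : ∃ C : Matrix n n ℝ, N = Cᵀ * C := by
    open scoped MatrixOrder in exact CStarAlgebra.nonneg_iff_eq_star_mul_self.mp hN.nonneg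
  have hCe : C *ᵥ e = 0 := by
    have hnorm : C *ᵥ e ⬝ᵥ C *ᵥ e = e ⬝ᵥ (Cᵀ * C) *ᵥ e := by
      rw [← mulVec_mulVec, dotProduct_mulVec e Cᵀ, vecMul_transpose]
    rw [← dotProduct_self_eq_zero, hnorm, he, dotProduct_zero]
  rw [← Matrix.mul_assoc, trace_mul_cycle]
  refine Finset.sum_nonneg fun i _ => ?_
  have hdiag : (C * Q * Cᵀ).diag i = C i ⬝ᵥ Q *ᵥ C i := by
    rw [dotProduct_mulVec, diag_apply, mul_apply']
    rfl
  exact hdiag ▸ hQ (C i) (congrFun hCe i)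

end Matrix

variable {m : ℕ}

theorem qf_add_qf_neg (A : Matrix (Fin (m+1)) (Fin (m+1)) ℝ) (v : Fin m → ℝ) :
    qf A v + qf A (-v) = 2 * qf A 0 + 2 * (Fin.snoc v 0 ⬝ᵥ A *ᵥ Fin.snoc v 0) := by
  have hv : (Fin.snoc v 1 : Fin (m+1) → ℝ) = Fin.snoc v 0 + Fin.snoc 0 1 := by
    ext i
    refine Fin.lastCases ?_ (fun k => ?_) i <;> simp
  have hnv : (Fin.snoc (-v) 1 : Fin (m+1) → ℝ) = -Fin.snoc v 0 + Fin.snoc 0 1 := by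
    ext i
    refine Fin.lastCases ?_ (fun k => ?_) i <;> simp
  simp only [qf, hv, hnv, mulVec_add, mulVec_neg, add_dotProduct, dotProduct_add, neg_dotProduct,
    dotProduct_neg]
  ring

theorem dotProduct_mulVec_nonneg_of_convexOn_qf {A : Matrix (Fin (m+1)) (Fin (m+1)) ℝ}
    (hA : ConvexOn ℝ univ (qf A)) {w : Fin (m+1) → ℝ} (hw : w (Fin.last m) = 0) :
    0 ≤ w ⬝ᵥ A *ᵥ w := by
  obtain ⟨v, rfl⟩ : ∃ v, w = Fin.snoc v 0 := ⟨Fin.init w, by rw [← hw, Fin.snoc_init_self]⟩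
  have hmid := hA.2 (mem_univ v) (mem_univ (-v)) (by norm_num : (0:ℝ) ≤ 1/2)
    (by norm_num : (0:ℝ) ≤ 1/2) (by norm_num)
  rw [smul_neg, add_neg_cancel, smul_eq_mul, smul_eq_mul] at hmid
  linarith [qf_add_qf_neg A v]

theorem convexOn_qf_neg_iff {A : Matrix (Fin (m+1)) (Fin (m+1)) ℝ} :
    ConvexOn ℝ univ (qf (-A)) ↔ ConcaveOn ℝ univ (qf A) := by
  rw [← neg_convexOn_iff]
  congr!
  ext u
  simp [qf, neg_mulVec]

theorem trace_mul_vecMulVec_col_last_le {B X : Matrix (Fin (m+1)) (Fin (m+1)) ℝ}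
    (hB : ConvexOn ℝ univ (qf B)) (hX : X.PosSemidef) (hX1 : X (Fin.last m) (Fin.last m) = 1) :
    (B * vecMulVec (X.col (Fin.last m)) (X.col (Fin.last m))).trace ≤ (B * X).trace := by
  set x := X.col (Fin.last m)
  have hNe : (X - vecMulVec x x) *ᵥ Pi.single (Fin.last m) 1 = 0 := by
    ext i
    simp [x, vecMulVec_apply, hX1]
  have hBN := trace_mul_nonneg_of_mulVec_eq_zero (hX.sub_vecMulVec_col hX1) hNe
    fun w hw => dotProduct_mulVec_nonneg_of_convexOn_qf hB (by rwa [dotProduct_single_one] at hw)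
  rw [Matrix.mul_sub, trace_sub] at hBN
  linarith

theorem stmt_13_general (m : ℕ)
    (𝒜 : Set (Matrix (Fin (m+1)) (Fin (m+1)) ℝ))
    (Q : Matrix (Fin (m+1)) (Fin (m+1)) ℝ)
    (hQconv : ConvexOn ℝ Set.univ (fun u : Fin m → ℝ => qf Q u))
    (hAconc : ∀ A ∈ 𝒜, ConcaveOn ℝ Set.univ (fun u : Fin m → ℝ => qf A u))
    (hopt : ∃ Xs : Matrix (Fin (m+1)) (Fin (m+1)) ℝ,
      (Xs.PosSemidef ∧ (∀ A ∈ 𝒜, 0 ≤ (A * Xs).trace) ∧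
        Xs (Fin.last m) (Fin.last m) = 1) ∧
      ∀ X : Matrix (Fin (m+1)) (Fin (m+1)) ℝ, X.PosSemidef →
        (∀ A ∈ 𝒜, 0 ≤ (A * X).trace) → X (Fin.last m) (Fin.last m) = 1 →
        (Q * Xs).trace ≤ (Q * X).trace) :
    ∃ x : Fin (m+1) → ℝ, (vecMulVec x x).PosSemidef ∧
      (∀ A ∈ 𝒜, 0 ≤ (A * vecMulVec x x).trace) ∧
      (vecMulVec x x) (Fin.last m) (Fin.last m) = 1 ∧
      ∀ X : Matrix (Fin (m+1)) (Fin (m+1)) ℝ, X.PosSemidef →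
        (∀ A ∈ 𝒜, 0 ≤ (A * X).trace) → X (Fin.last m) (Fin.last m) = 1 →
        (Q * vecMulVec x x).trace ≤ (Q * X).trace := by
  obtain ⟨Xs, ⟨hXs, hfeas, hXs1⟩, hmin⟩ := hopt
  refine ⟨Xs.col (Fin.last m), by simpa using posSemidef_vecMulVec_self_star (Xs.col (Fin.last m)),
    fun A hA => ?_, by simp [vecMulVec_apply, hXs1], fun X hX hXA hX1 =>
      (trace_mul_vecMulVec_col_last_le hQconv hXs hXs1).trans (hmin X hX hXA hX1)⟩
  have hAx := trace_mul_vecMulVec_col_last_le (convexOn_qf_neg_iff.mpr (hAconc A hA)) hXs hXs1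
  simp only [Matrix.neg_mul, trace_neg, neg_le_neg_iff] at hAx
  exact (hfeas A hA).trans hAx

/-- exactness of the SDP relaxation of a convex QCQP.  Matrices
have size `n = m+1` with `m ≥ 1`, i.e. `n ≥ 2`; the last coordinate plays the
role of the index `n`. -/
theorem stmt_13 (m : ℕ) (hm : 1 ≤ m)
    (𝒜 : Set (Matrix (Fin (m+1)) (Fin (m+1)) ℝ)) (h𝒜fin : 𝒜.Finite)
    (h𝒜sym : ∀ A ∈ 𝒜, A.IsSymm)
    (Q : Matrix (Fin (m+1)) (Fin (m+1)) ℝ) (hQsym : Q.IsSymm)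
    (hQconv : ConvexOn ℝ Set.univ (fun u : Fin m → ℝ => qf Q u))
    (hAconc : ∀ A ∈ 𝒜, ConcaveOn ℝ Set.univ (fun u : Fin m → ℝ => qf A u))
    (hopt : ∃ Xs : Matrix (Fin (m+1)) (Fin (m+1)) ℝ,
      (Xs.PosSemidef ∧ (∀ A ∈ 𝒜, 0 ≤ (A * Xs).trace) ∧
        Xs (Fin.last m) (Fin.last m) = 1) ∧
      ∀ X : Matrix (Fin (m+1)) (Fin (m+1)) ℝ, X.PosSemidef →
        (∀ A ∈ 𝒜, 0 ≤ (A * X).trace) → X (Fin.last m) (Fin.last m) = 1 →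
        (Q * Xs).trace ≤ (Q * X).trace) :
    ∃ x : Fin (m+1) → ℝ, (vecMulVec x x).PosSemidef ∧
      (∀ A ∈ 𝒜, 0 ≤ (A * vecMulVec x x).trace) ∧
      (vecMulVec x x) (Fin.last m) (Fin.last m) = 1 ∧
      ∀ X : Matrix (Fin (m+1)) (Fin (m+1)) ℝ, X.PosSemidef →
        (∀ A ∈ 𝒜, 0 ≤ (A * X).trace) → X (Fin.last m) (Fin.last m) = 1 →
        (Q * vecMulVec x x).trace ≤ (Q * X).trace :=
  stmt_13_general m 𝒜 Q hQconv hAconc hopt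
end
end

section
/- Let Q ∈ S^n and let e ∈ ℝ^n be the all-ones vector. Then inf{xᵀ·Q·x : x ∈ ℝ^n_+, eᵀ·x = 1} = inf{⟨Q,X⟩ : X ∈ CP^n, ⟨e·eᵀ, X⟩ = 1}; that is, the completely positive programming relaxation of the standard quadratic optimization problem over the simplex is exact for every Q. -/
open Matrix

noncomputable section

/-!
Each `x` in the simplex gives the feasible `X = x xᵀ` with `⟨Q, X⟩ = xᵀ Q x`, so the CPP value is at
most the simplex value. Conversely, if `c ≤ yᵀ Q y` on the simplex, rescaling gives
`c (eᵀ x)² ≤ xᵀ Q x`, i.e. `c ⟨e eᵀ, x xᵀ⟩ ≤ ⟨Q, x xᵀ⟩`, for every `x ≥ 0`. This inequality is linear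
in the matrix, so it holds on the convex hull `CP^n`, and on the feasible set it reads `c ≤ ⟨Q, X⟩`.
-/

section

variable {ι : Type*} [Fintype ι]

theorem trace_mul_vecMulVec_self (A : Matrix ι ι ℝ) (x : ι → ℝ) :
    (A * vecMulVec x x).trace = x ⬝ᵥ A *ᵥ x := by
  rw [mul_vecMulVec, trace_vecMulVec, dotProduct_comm]

theorem trace_vecMulVec_one_mul_vecMulVec_self (x : ι → ℝ) :
    (vecMulVec 1 1 * vecMulVec x x).trace = (1 ⬝ᵥ x) ^ 2 := by
  rw [trace_mul_vecMulVec_self, vecMulVec_mulVec]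
  simp [dotProduct_comm x 1, sq]

theorem mul_one_dotProduct_sq_le_dotProduct_mulVec {Q : Matrix ι ι ℝ} {c : ℝ}
    (hc : ∀ y : ι → ℝ, 0 ≤ y → 1 ⬝ᵥ y = 1 → c ≤ y ⬝ᵥ Q *ᵥ y) {x : ι → ℝ} (hx : 0 ≤ x) :
    c * (1 ⬝ᵥ x) ^ 2 ≤ x ⬝ᵥ Q *ᵥ x := by
  set s := 1 ⬝ᵥ x
  rcases (show 0 ≤ s from dotProduct_nonneg_of_nonneg zero_le_one hx).eq_or_lt with hs | hs
  · have hx0 : x = 0 :=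
      (Fintype.sum_eq_zero_iff_of_nonneg hx).1 (by rw [← one_dotProduct]; exact hs.symm)
    simp [← hs, hx0]
  · have hy := hc (s⁻¹ • x) (smul_nonneg (inv_nonneg.2 hs.le) hx)
      (by rw [dotProduct_smul, smul_eq_mul, inv_mul_cancel₀ hs.ne'])
    rw [smul_dotProduct, mulVec_smul, dotProduct_smul, smul_eq_mul, smul_eq_mul,
      ← mul_assoc, ← sq, inv_pow, le_inv_mul_iff₀ (by positivity)] at hy
    linarith

end

theorem mul_trace_le_trace_mul_of_mem_CP {n : ℕ} {Q : Matrix (Fin n) (Fin n) ℝ} {c : ℝ}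
    (hc : ∀ y : Fin n → ℝ, 0 ≤ y → 1 ⬝ᵥ y = 1 → c ≤ y ⬝ᵥ Q *ᵥ y)
    {X : Matrix (Fin n) (Fin n) ℝ} (hX : X ∈ CP n) :
    c * (vecMulVec 1 1 * X).trace ≤ (Q * X).trace := by
  rw [← sub_nonpos]
  refine convexHull_min (t := {X | c * (vecMulVec 1 1 * X).trace - (Q * X).trace ≤ 0}) ?_
    (convex_halfSpace_le ?_ 0) hX
  · rintro _ ⟨x, hx, rfl⟩
    rw [Set.mem_ofPred_eq, trace_vecMulVec_one_mul_vecMulVec_self, trace_mul_vecMulVec_self,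
      sub_nonpos]
    exact mul_one_dotProduct_sq_le_dotProduct_mulVec hc hx
  · constructor <;> intros <;>
      simp only [Matrix.mul_add, Matrix.mul_smul, trace_add, trace_smul, smul_eq_mul] <;> ring

theorem stmt_18_general (n : ℕ) (Q : Matrix (Fin n) (Fin n) ℝ) :
    sInf ((fun x : Fin n → ℝ => ((dotProduct x (Q.mulVec x) : ℝ) : EReal)) ''
      {x | 0 ≤ x ∧ dotProduct (fun _ => (1 : ℝ)) x = 1}) =
    sInf ((fun X : Matrix (Fin n) (Fin n) ℝ => (((Q * X).trace : ℝ) : EReal)) ''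
      {X | X ∈ CP n ∧
        ((vecMulVec (fun _ => (1 : ℝ)) (fun _ => (1 : ℝ))) * X).trace = 1}) := by
  refine le_antisymm (le_sInf ?_) (le_sInf ?_)
  · rintro _ ⟨X, ⟨hX, hXE⟩, rfl⟩
    refine EReal.ge_of_forall_gt_iff_ge.1 fun c hc ↦ ?_
    have hcq : ∀ y : Fin n → ℝ, 0 ≤ y → 1 ⬝ᵥ y = 1 → c ≤ y ⬝ᵥ Q *ᵥ y := fun y hy hy1 ↦
      EReal.coe_le_coe_iff.1 (hc.trans_le (sInf_le ⟨y, ⟨hy, hy1⟩, rfl⟩)).le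
    have hcX := mul_trace_le_trace_mul_of_mem_CP hcq hX
    rw [← Pi.one_def] at hXE
    rw [hXE, mul_one] at hcX
    exact EReal.coe_le_coe_iff.2 hcX
  · rintro _ ⟨x, ⟨hx, hx1⟩, rfl⟩
    refine sInf_le ⟨vecMulVec x x, ⟨subset_convexHull ℝ _ ⟨x, hx, rfl⟩, ?_⟩, ?_⟩
    · rw [← Pi.one_def] at hx1 ⊢
      rw [trace_vecMulVec_one_mul_vecMulVec_self, hx1, one_pow]
    · exact congrArg _ (trace_mul_vecMulVec_self Q x)

/-- Bomze et al.: the CPP relaxation of the standard quadratic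
optimization problem over the simplex is exact for every `Q`.  Infima are taken
in `EReal`. -/
theorem stmt_18 (n : ℕ) (Q : Matrix (Fin n) (Fin n) ℝ) (hQsym : Q.IsSymm) :
    sInf ((fun x : Fin n → ℝ => ((dotProduct x (Q.mulVec x) : ℝ) : EReal)) ''
      {x | 0 ≤ x ∧ dotProduct (fun _ => (1 : ℝ)) x = 1}) =
    sInf ((fun X : Matrix (Fin n) (Fin n) ℝ => (((Q * X).trace : ℝ) : EReal)) ''
      {X | X ∈ CP n ∧
        ((vecMulVec (fun _ => (1 : ℝ)) (fun _ => (1 : ℝ))) * X).trace = 1}) :=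
  stmt_18_general n Q
end
end
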